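/- arXiv:2007.04351 — 9 statements merged into one kernel-verified Lean document; each statement's English description precedes it below -/
import Mathlib

section
/- For every real number d ≥ 1/2, ψ(d) < 2·ξ(d); that is, (1/2)·(1 − exp(−(d/2)·(1+e^{−d}))) < (2/3)·(1 − (2d+1)^{−1/2}). -/
/-!
Write `t = √(2d + 1)`, so that `ξ((t² - 1)/2) = (1 - 1/t)/3` is rational at rational `t`.
For `t ≥ 4` we have `2ξ ≥ 1/2 > ψ`. For `a ≤ d ≤ b` one has `ξ(d) ≥ ξ(a)`, and `ψ(d)` is at
most `ψ`'s formula with the outer `d` replaced by `b` and the inner `e^{-d}` by `e^{-a}`.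
Bounding `e^{-a}` by the reciprocal of a Taylor sum and `e^{-x}` from below by `(1 - x/n)ⁿ`
turns `ψ < 2ξ` on such an interval into an inequality between rationals; 25 intervals with
rational endpoints in `t` cover `[7/5, 4)`.
-/

open Real Set
open scoped Nat

noncomputable def psi (d : ℝ) : ℝ := 1 / 2 * (1 - exp (-(d / 2) * (1 + exp (-d))))

noncomputable def xi (d : ℝ) : ℝ := 1 / 3 * (1 - (2 * d + 1) ^ (-(1 / 2) : ℝ))

theorem List.forall_mem_Ico_of_isChain {α : Type*} [LinearOrder α] {p : α → Prop} :
    ∀ {l : List α} (hl : l ≠ []), l.IsChain (fun x y => ∀ z ∈ Set.Icc x y, p z) →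
      ∀ z ∈ Set.Ico (l.head hl) (l.getLast hl), p z
  | [a], _, _, _, hz => absurd hz.2 (not_lt.2 hz.1)
  | a :: b :: l, _, h, z, hz => by
    rw [isChain_cons_cons] at h
    rcases lt_or_ge z b with hzb | hbz
    · exact h.1 z ⟨hz.1, hzb.le⟩
    · exact forall_mem_Ico_of_isChain (cons_ne_nil b l) h.2 z ⟨hbz, hz.2⟩

theorem one_le_sum_range_pow_div_factorial {a : ℝ} (ha : 0 ≤ a) {m : ℕ} (hm : 0 < m) :
    1 ≤ ∑ i ∈ Finset.range m, a ^ i / (i ! : ℝ) := by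
  simpa using Finset.single_le_sum (f := fun i => a ^ i / (i ! : ℝ)) (fun i _ => by positivity)
    (Finset.mem_range.2 hm)

theorem exp_neg_le_inv_sum_range {a : ℝ} (ha : 0 ≤ a) {m : ℕ} (hm : 0 < m) :
    exp (-a) ≤ (∑ i ∈ Finset.range m, a ^ i / (i ! : ℝ))⁻¹ := by
  rw [exp_neg]
  exact inv_anti₀ (one_pos.trans_le (one_le_sum_range_pow_div_factorial ha hm))
    (sum_le_exp_of_nonneg ha m)

noncomputable def psiUpperBound (m n : ℕ) (a b : ℝ) : ℝ :=
  1 / 2 * (1 - (1 - b / 2 * (1 + (∑ i ∈ Finset.range m, a ^ i / (i ! : ℝ))⁻¹) / n) ^ n)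

theorem psi_le_psiUpperBound {a b d : ℝ} {m n : ℕ} (hm : 0 < m) (ha : 0 ≤ a) (had : a ≤ d)
    (hdb : d ≤ b) (hbn : b ≤ n) : psi d ≤ psiUpperBound m n a b := by
  set c := (∑ i ∈ Finset.range m, a ^ i / (i ! : ℝ))⁻¹
  have hc : exp (-d) ≤ c :=
    (exp_le_exp.2 (neg_le_neg had)).trans (exp_neg_le_inv_sum_range ha hm)
  have hc1 : c ≤ 1 := inv_le_one_of_one_le₀ (one_le_sum_range_pow_div_factorial ha hm)
  have hb : 0 ≤ b := ha.trans (had.trans hdb)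
  have hx : d / 2 * (1 + exp (-d)) ≤ b / 2 * (1 + c) := by gcongr
  have hxn : b / 2 * (1 + c) ≤ n := by nlinarith
  have hlow : (1 - b / 2 * (1 + c) / n) ^ n ≤ exp (-(d / 2) * (1 + exp (-d))) :=
    (one_sub_div_pow_le_exp_neg hxn).trans (exp_le_exp.2 (by linarith))
  unfold psi psiUpperBound
  linarith

theorem psi_lt_half (d : ℝ) : psi d < 1 / 2 := by
  unfold psi
  linarith [exp_pos (-(d / 2) * (1 + exp (-d)))]

theorem xi_half_sq_sub_one {t : ℝ} (ht : 0 ≤ t) : xi ((t ^ 2 - 1) / 2) = 1 / 3 * (1 - t⁻¹) := by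
  rw [xi, show 2 * ((t ^ 2 - 1) / 2) + 1 = t ^ 2 by ring, rpow_neg (sq_nonneg t),
    ← sqrt_eq_rpow, sqrt_sq ht]

theorem psi_lt_two_xi_of_four_le {t : ℝ} (ht : 4 ≤ t) :
    psi ((t ^ 2 - 1) / 2) < 2 * xi ((t ^ 2 - 1) / 2) := by
  have ht_inv : t⁻¹ ≤ 1 / 4 := by
    rw [inv_le_comm₀ (by linarith) (by norm_num)]
    norm_num
    linarith
  calc psi ((t ^ 2 - 1) / 2) < 1 / 2 := psi_lt_half _
    _ ≤ 2 * xi ((t ^ 2 - 1) / 2) := by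
      rw [xi_half_sq_sub_one (by linarith)]
      linarith

def GapCertificate (t₀ t₁ : ℝ) : Prop :=
  1 ≤ t₀ ∧ t₁ ≤ 4 ∧ psiUpperBound 6 128 ((t₀ ^ 2 - 1) / 2) ((t₁ ^ 2 - 1) / 2) < 2 / 3 * (1 - t₀⁻¹)

theorem GapCertificate.psi_lt_two_xi {t₀ t₁ : ℝ} (h : GapCertificate t₀ t₁) :
    ∀ t ∈ Icc t₀ t₁, psi ((t ^ 2 - 1) / 2) < 2 * xi ((t ^ 2 - 1) / 2) := by
  obtain ⟨ht₀, ht₁, hcert⟩ := h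
  rintro t ⟨ht₀t, htt₁⟩
  have ht : 0 < t := by linarith
  have hpsi : psi ((t ^ 2 - 1) / 2) ≤ psiUpperBound 6 128 ((t₀ ^ 2 - 1) / 2) ((t₁ ^ 2 - 1) / 2) :=
    psi_le_psiUpperBound (by norm_num) (by nlinarith) (by gcongr) (by gcongr)
      (by push_cast; nlinarith)
  have hxi : 1 / 3 * (1 - t₀⁻¹) ≤ xi ((t ^ 2 - 1) / 2) := by
    rw [xi_half_sq_sub_one ht.le]
    gcongr
  linarith

noncomputable def breakpoints : List ℝ :=
  [140, 147, 155, 164, 174, 185, 197, 210, 224, 238, 252, 265, 277, 287, 296, 304, 312, 319, 326,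
    333, 340, 347, 356, 367, 384, 400].map (· / 100)

theorem breakpoints_ne_nil : breakpoints ≠ [] := by simp [breakpoints]

theorem isChain_gapCertificate_breakpoints : breakpoints.IsChain GapCertificate := by
  norm_num [breakpoints, GapCertificate, psiUpperBound, Finset.sum_range_succ, Nat.factorial]

/-- For every `d ≥ 1/2`, `ψ(d) < 2 ξ(d)`, i.e.
`(1/2)(1 - exp(-(d/2)(1+e^{-d}))) < (2/3)(1 - (2d+1)^{-1/2})`. -/
theorem psi_lt_two_xi (d : ℝ) (hd : 1 / 2 ≤ d) :
    (1 / 2) * (1 - Real.exp (-(d / 2) * (1 + Real.exp (-d))))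
      < (2 / 3) * (1 - (2 * d + 1) ^ (-(1 / 2) : ℝ)) := by
  set t := √(2 * d + 1)
  have hdt : d = (t ^ 2 - 1) / 2 := by
    rw [sq_sqrt (by linarith)]
    ring
  have ht : 7 / 5 ≤ t := le_sqrt_of_sq_le (by linarith)
  suffices psi ((t ^ 2 - 1) / 2) < 2 * xi ((t ^ 2 - 1) / 2) by
    rw [← hdt, psi, xi] at this
    linarith
  rcases lt_or_ge t 4 with h | h
  · have hcover := isChain_gapCertificate_breakpoints.imp fun _ _ => GapCertificate.psi_lt_two_xi
    refine List.forall_mem_Ico_of_isChain breakpoints_ne_nil hcover t ⟨?_, ?_⟩ <;>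
      norm_num [breakpoints] <;> linarith
  · exact psi_lt_two_xi_of_four_le h
end

section
/- For every finite triangle-tree T, the minimum size of a cover of the triangles of T by edges equals the maximum size of a set of pairwise edge-disjoint triangles of T; that is, τ(T) = ν(T). -/
/-!
Every graph has `ν ≤ τ`: an edge of a cover lies in at most one triangle of an edge-disjoint
family. For triangle-trees we prove, along the construction, that every family `𝒮` of triangles
has a cover `F` and an edge-disjoint subfamily `𝒯 ⊆ 𝒮` with `|F| = |𝒯|`. When the triangle
`xyz` is glued onto the edge `xy`, the new vertex `z` lies in no other triangle. Apply induction
to the members of `𝒮` not containing `xy`: if the resulting cover already contains `xy`, it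
covers all of `𝒮`; otherwise add `xy` to the cover and `xyz` to the family, which stays
edge-disjoint since `xyz` meets every old triangle in at most one vertex.
-/

noncomputable section

/-- `ν(G)`: the maximum size of a set of pairwise edge-disjoint triangles of `G`. -/
def triMatchNum {V : Type*} [Fintype V] [DecidableEq V] (G : SimpleGraph V) : ℕ :=
  sSup {k | ∃ 𝒯 : Finset (Finset V), (∀ t ∈ 𝒯, t ∈ G.cliqueSet 3) ∧
    (𝒯 : Set (Finset V)).Pairwise (fun a b => (a ∩ b).card ≤ 1) ∧ 𝒯.card = k}

/-- `τ(G)`: the minimum size of a set of edges of `G` meeting every triangle of `G`. -/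
def triCoverNum {V : Type*} [Fintype V] [DecidableEq V] (G : SimpleGraph V) : ℕ :=
  sInf {k | ∃ F : Finset (Sym2 V), (∀ e ∈ F, e ∈ G.edgeSet) ∧
    (∀ t ∈ G.cliqueSet 3, ∃ e ∈ F, ∀ v ∈ e, v ∈ t) ∧ F.card = k}

/-- A triangle-tree: built from a single edge by repeatedly adding a triangle consisting of an
existing edge together with a brand-new vertex. -/
inductive IsTriTree {V : Type*} : SimpleGraph V → Prop where
  | single (x y : V) (hxy : x ≠ y) : IsTriTree (SimpleGraph.fromEdgeSet {s(x, y)})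
  | grow (T : SimpleGraph V) (x y z : V) (hT : IsTriTree T) (hxy : T.Adj x y)
      (hz : z ∉ T.support) :
      IsTriTree (T ⊔ SimpleGraph.fromEdgeSet {s(x, z), s(y, z)})

open SimpleGraph Finset

section

variable {V : Type*}

def IsTriCover (G : SimpleGraph V) (𝒮 : Set (Finset V)) (F : Finset (Sym2 V)) : Prop :=
  (∀ e ∈ F, e ∈ G.edgeSet) ∧ ∀ t ∈ 𝒮, ∃ e ∈ F, ∀ v ∈ e, v ∈ t

lemma IsTriCover.mono {G G' : SimpleGraph V} {𝒮 : Set (Finset V)} {F : Finset (Sym2 V)}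
    (hF : IsTriCover G 𝒮 F) (h : G ≤ G') : IsTriCover G' 𝒮 F :=
  ⟨fun e he => edgeSet_mono h (hF.1 e he), hF.2⟩

section Grow

variable {T : SimpleGraph V} {x y z : V}

lemma notMem_of_mem_cliqueSet (hz : z ∉ T.support) {n : ℕ} (hn : 1 < n) {t : Finset V}
    (ht : t ∈ T.cliqueSet n) : z ∉ t := fun hzt => by
  obtain ⟨w, hw, hwz⟩ := exists_mem_ne (s := t) (ht.card_eq ▸ hn) z
  exact hz ⟨w, ht.isClique hzt hw hwz.symm⟩

lemma adj_of_adj_sup_fromEdgeSet {a b : V} (h : (T ⊔ fromEdgeSet {s(x, z), s(y, z)}).Adj a b)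
    (ha : a ≠ z) (hb : b ≠ z) : T.Adj a b := by
  rcases (sup_adj _ _ _ _).1 h with h | h
  · exact h
  · rw [fromEdgeSet_adj] at h
    simp only [Set.mem_insert_iff, Set.mem_singleton_iff, Sym2.eq_iff] at h
    grind

lemma eq_or_eq_of_adj_sup_fromEdgeSet (hz : z ∉ T.support) {a : V}
    (h : (T ⊔ fromEdgeSet {s(x, z), s(y, z)}).Adj a z) : a = x ∨ a = y := by
  rcases (sup_adj _ _ _ _).1 h with h | h
  · exact absurd ⟨a, h.symm⟩ hz
  · rw [fromEdgeSet_adj] at h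
    simp only [Set.mem_insert_iff, Set.mem_singleton_iff, Sym2.eq_iff] at h
    grind

end Grow

lemma cliqueSet_three_fromEdgeSet_pair (x y : V) : (fromEdgeSet {s(x, y)}).cliqueSet 3 = ∅ := by
  classical
  refine Set.eq_empty_of_forall_notMem fun t ht => ?_
  obtain ⟨a, b, c, hab, hac, hbc, -⟩ := is3Clique_iff.1 ht
  simp only [fromEdgeSet_adj, Set.mem_singleton_iff, Sym2.eq_iff] at hab hac hbc
  grind

section DecidableEq

variable [DecidableEq V]

lemma mem_cliqueSet_three_sup_fromEdgeSet {T : SimpleGraph V} {x y z : V} (hz : z ∉ T.support)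
    {t : Finset V} (ht : t ∈ (T ⊔ fromEdgeSet {s(x, z), s(y, z)}).cliqueSet 3) :
    t = {x, y, z} ∨ t ∈ T.cliqueSet 3 := by
  by_cases hzt : z ∈ t
  · left
    have hsub : t.erase z ⊆ {x, y} := fun a ha => by
      have := eq_or_eq_of_adj_sup_fromEdgeSet hz
        (ht.isClique (mem_of_mem_erase ha) hzt (ne_of_mem_erase ha))
      simpa using this
    have hcard : (t.erase z).card = 2 := by rw [card_erase_of_mem hzt, ht.card_eq]
    have hxy : t.erase z = {x, y} :=
      eq_of_subset_of_card_le hsub (hcard ▸ card_le_two)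
    rw [← insert_erase hzt, hxy]
    ext; simp only [mem_insert, mem_singleton]; tauto
  · right
    refine ⟨fun a ha b hb hab => ?_, ht.card_eq⟩
    exact adj_of_adj_sup_fromEdgeSet (ht.isClique ha hb hab) (ne_of_mem_of_not_mem ha hzt)
      (ne_of_mem_of_not_mem hb hzt)

def IsTriMatching (𝒯 : Finset (Finset V)) : Prop :=
  (𝒯 : Set (Finset V)).Pairwise fun a b => (a ∩ b).card ≤ 1

lemma two_le_card_inter_of_forall_mem {e : Sym2 V} (he : ¬e.IsDiag) {s t : Finset V}
    (hs : ∀ v ∈ e, v ∈ s) (ht : ∀ v ∈ e, v ∈ t) : 2 ≤ (s ∩ t).card := by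
  induction e using Sym2.ind with
  | h a b =>
    have hab : a ≠ b := by simpa using he
    calc 2 = ({a, b} : Finset V).card := (card_pair hab).symm
      _ ≤ (s ∩ t).card := card_le_card fun v hv => by
        have hv' : v ∈ s(a, b) := Sym2.mem_iff.2 (by simpa using hv)
        exact mem_inter.2 ⟨hs v hv', ht v hv'⟩

lemma IsTriMatching.card_le_card {G : SimpleGraph V} {𝒯 : Finset (Finset V)}
    {F : Finset (Sym2 V)} (h𝒯 : IsTriMatching 𝒯) (hF : IsTriCover G 𝒯 F) :
    𝒯.card ≤ F.card :=
  card_le_card_of_forall_subsingleton (fun t e => ∀ v ∈ e, v ∈ t) hF.2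
    fun e he t₁ ht₁ t₂ ht₂ => by
      by_contra hne
      have h₁ := h𝒯 ht₁.1 ht₂.1 hne
      have h₂ := two_le_card_inter_of_forall_mem (G.not_isDiag_of_mem_edgeSet (hF.1 e he))
        ht₁.2 ht₂.2
      omega

lemma IsTriCover.insert_of_adj {G : SimpleGraph V} {𝒮 : Set (Finset V)}
    {F : Finset (Sym2 V)} {x y : V} (hF : IsTriCover G {t ∈ 𝒮 | ¬(x ∈ t ∧ y ∈ t)} F)
    (hxy : G.Adj x y) : IsTriCover G 𝒮 (insert s(x, y) F) := by
  refine ⟨fun e he => ?_, fun t ht => ?_⟩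
  · rcases mem_insert.1 he with rfl | he
    exacts [hxy, hF.1 e he]
  · by_cases hxyt : x ∈ t ∧ y ∈ t
    · exact ⟨s(x, y), mem_insert_self _ _, fun v hv => by
        rcases Sym2.mem_iff.1 hv with rfl | rfl
        exacts [hxyt.1, hxyt.2]⟩
    · obtain ⟨e, he, het⟩ := hF.2 t ⟨ht, hxyt⟩
      exact ⟨e, mem_insert_of_mem he, het⟩

lemma IsTriMatching.insert_triple {𝒯 : Finset (Finset V)} {x y z : V} (h𝒯 : IsTriMatching 𝒯)
    (hxy : ∀ t ∈ 𝒯, ¬(x ∈ t ∧ y ∈ t)) (hz : ∀ t ∈ 𝒯, z ∉ t) :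
    IsTriMatching (insert {x, y, z} 𝒯) := by
  have hle : ∀ t ∈ 𝒯, ({x, y, z} ∩ t).card ≤ 1 := fun t ht => by
    refine card_le_one.2 fun a ha b hb => ?_
    have := hxy t ht
    have := hz t ht
    simp only [mem_inter, mem_insert, mem_singleton] at ha hb
    grind
  rw [IsTriMatching, coe_insert, Set.pairwise_insert]
  exact ⟨h𝒯, fun t ht _ => ⟨hle t ht, inter_comm t _ ▸ hle t ht⟩⟩

theorem IsTriTree.exists_isTriCover_isTriMatching_card_eq {T : SimpleGraph V}
    (hT : IsTriTree T) (𝒮 : Set (Finset V)) (h𝒮 : 𝒮 ⊆ T.cliqueSet 3) :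
    ∃ (F : Finset (Sym2 V)) (𝒯 : Finset (Finset V)),
      IsTriCover T 𝒮 F ∧ ↑𝒯 ⊆ 𝒮 ∧ IsTriMatching 𝒯 ∧ F.card = 𝒯.card := by
  induction hT generalizing 𝒮 with
  | single x y _ =>
    have h𝒮 : 𝒮 = ∅ := Set.subset_empty_iff.1 (cliqueSet_three_fromEdgeSet_pair x y ▸ h𝒮)
    subst h𝒮
    exact ⟨∅, ∅, ⟨by simp, by simp⟩, by simp, by simp [IsTriMatching], rfl⟩
  | grow T x y z _ hxy hz ih =>
    have hT𝒮 : {t ∈ 𝒮 | t ≠ {x, y, z}} ⊆ T.cliqueSet 3 := fun t ⟨ht, htxyz⟩ =>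
      (mem_cliqueSet_three_sup_fromEdgeSet hz (h𝒮 ht)).resolve_left htxyz
    by_cases hxyz : {x, y, z} ∈ 𝒮
    · have h𝒮₀ : {t ∈ 𝒮 | ¬(x ∈ t ∧ y ∈ t)} ⊆ T.cliqueSet 3 :=
        fun t ⟨ht, hxyt⟩ => hT𝒮 ⟨ht, by rintro rfl; simp at hxyt⟩
      obtain ⟨F, 𝒯, hF, h𝒯𝒮, h𝒯, hcard⟩ := ih _ h𝒮₀
      have hF' : IsTriCover (T ⊔ fromEdgeSet {s(x, z), s(y, z)}) 𝒮 (insert s(x, y) F) :=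
        (hF.insert_of_adj hxy).mono le_sup_left
      by_cases hxyF : s(x, y) ∈ F
      · exact ⟨F, 𝒯, insert_eq_of_mem hxyF ▸ hF', fun t ht => (h𝒯𝒮 ht).1, h𝒯, hcard⟩
      have hxyz𝒯 : {x, y, z} ∉ 𝒯 := fun h => (h𝒯𝒮 h).2 (by simp)
      refine ⟨_, _, hF', ?_, h𝒯.insert_triple (fun t ht => (h𝒯𝒮 ht).2)
        (fun t ht => notMem_of_mem_cliqueSet hz (by norm_num) (h𝒮₀ (h𝒯𝒮 ht))), ?_⟩
      · rw [coe_insert, Set.insert_subset_iff]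
        exact ⟨hxyz, fun t ht => (h𝒯𝒮 ht).1⟩
      · rw [card_insert_of_notMem hxyF, card_insert_of_notMem hxyz𝒯, hcard]
    · obtain ⟨F, 𝒯, hF, h𝒯𝒮, h𝒯, hcard⟩ :=
        ih 𝒮 fun t ht => hT𝒮 ⟨ht, by rintro rfl; exact hxyz ht⟩
      exact ⟨F, 𝒯, hF.mono le_sup_left, h𝒯𝒮, h𝒯, hcard⟩

end DecidableEq

section Fintype

variable [Fintype V] [DecidableEq V] {G : SimpleGraph V}

lemma triCoverNum_le_card {F : Finset (Sym2 V)} (hF : IsTriCover G (G.cliqueSet 3) F) :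
    triCoverNum G ≤ F.card :=
  Nat.sInf_le ⟨F, hF.1, hF.2, rfl⟩

lemma card_le_triMatchNum {𝒯 : Finset (Finset V)} (h𝒯G : ↑𝒯 ⊆ G.cliqueSet 3)
    (h𝒯 : IsTriMatching 𝒯) : 𝒯.card ≤ triMatchNum G :=
  le_csSup ⟨Fintype.card (Finset V), fun _ ⟨𝒯', _, _, hk⟩ => hk ▸ card_le_univ 𝒯'⟩
    ⟨𝒯, fun _ ht => h𝒯G ht, h𝒯, rfl⟩

lemma triMatchNum_le_card {F : Finset (Sym2 V)} (hF : IsTriCover G (G.cliqueSet 3) F) :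
    triMatchNum G ≤ F.card :=
  csSup_le ⟨0, ∅, by simp, by simp, rfl⟩ fun _ ⟨𝒯, h𝒯G, h𝒯, hk⟩ =>
    hk ▸ IsTriMatching.card_le_card h𝒯 ⟨hF.1, fun t ht => hF.2 t (h𝒯G t ht)⟩

lemma isTriCover_edgeSet : IsTriCover G (G.cliqueSet 3) (Set.toFinite G.edgeSet).toFinset := by
  refine ⟨fun e he => (Set.Finite.mem_toFinset _).1 he, fun t ht => ?_⟩
  obtain ⟨a, b, c, hab, -, -, rfl⟩ := is3Clique_iff.1 ht
  refine ⟨s(a, b), (Set.Finite.mem_toFinset _).2 hab, fun v hv => ?_⟩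
  rcases Sym2.mem_iff.1 hv with rfl | rfl <;> simp

lemma triMatchNum_le_triCoverNum : triMatchNum G ≤ triCoverNum G :=
  le_csInf ⟨_, _, isTriCover_edgeSet.1, isTriCover_edgeSet.2, rfl⟩ fun _ ⟨_, hF₁, hF₂, hk⟩ =>
    hk ▸ triMatchNum_le_card ⟨hF₁, hF₂⟩

end Fintype

end

/-- In a finite triangle-tree, the minimum triangle cover and the maximum triangle
matching have the same size: `τ(T) = ν(T)`. -/
theorem tau_eq_nu_of_triTree {V : Type*} [Fintype V] [DecidableEq V]
    (T : SimpleGraph V) (hT : IsTriTree T) : triCoverNum T = triMatchNum T := by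
  obtain ⟨F, 𝒯, hF, h𝒯T, h𝒯, hcard⟩ :=
    hT.exists_isTriCover_isTriMatching_card_eq (T.cliqueSet 3) subset_rfl
  refine le_antisymm ?_ triMatchNum_le_triCoverNum
  calc triCoverNum T ≤ F.card := triCoverNum_le_card hF
    _ = 𝒯.card := hcard
    _ ≤ triMatchNum T := card_le_triMatchNum h𝒯T h𝒯
end
end

section
/- Fix d > 0 and let p(n) = (d/(n−2))^{1/2}, and let γ = γ(n) be a sequence of positive integers with γ(n)·log log n / log n → 0. Then for distinct vertices x, y and every ε > 0, for all sufficiently large n the probability that xy is an edge of G = G_{n,p(n)} and S_{γ(n)}(xy) is not a triangle-tree is at most n^{−1+ε}. -/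
open MeasureTheory Filter

noncomputable section

/-- The Bernoulli(p) measure on `Bool`: mass `p` at `true` and `1-p` at `false`. -/
def berBool (p : ℝ) : Measure Bool :=
  ENNReal.ofReal p • Measure.dirac true + ENNReal.ofReal (1 - p) • Measure.dirac false

/-- The Erdős–Rényi measure `G_{n,p}`: each unordered pair of vertices receives an
independent Bernoulli(p) indicator. -/
def erMeasure (n : ℕ) (p : ℝ) : Measure (Sym2 (Fin n) → Bool) :=
  Measure.pi fun _ => berBool p

/-- The graph on `Fin n` determined by a sample point `ω`. -/
def erGraph (n : ℕ) (ω : Sym2 (Fin n) → Bool) : SimpleGraph (Fin n) where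
  Adj x y := x ≠ y ∧ ω s(x, y) = true
  symm := by
    constructor
    intro x y h
    exact ⟨h.1.symm, by rw [Sym2.eq_swap]; exact h.2⟩
  loopless := by
    constructor
    intro x h
    exact h.1 rfl

/-- Two edges of `G` lie in a common triangle of `G`. -/
def ShareTri {V : Type*} (G : SimpleGraph V) (a b : Sym2 V) : Prop :=
  a ∈ G.edgeSet ∧ b ∈ G.edgeSet ∧
    ∃ t ∈ G.cliqueSet 3, (∀ v ∈ a, v ∈ t) ∧ ∀ v ∈ b, v ∈ t

/-- The triangle-distance from `e` to `f` in `G` is at most `γ`. -/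
def triDistLE {V : Type*} (G : SimpleGraph V) : ℕ → Sym2 V → Sym2 V → Prop
  | 0, e, f => e = f
  | (γ + 1), e, f => triDistLE G γ e f ∨ ∃ g, triDistLE G γ e g ∧ ShareTri G g f

/-- `S_γ(e)`: the subgraph of `G` consisting of the edges of `G` at triangle-distance at
most `γ` from `e`. -/
def triBall {V : Type*} (G : SimpleGraph V) (γ : ℕ) (e : Sym2 V) : SimpleGraph V :=
  SimpleGraph.fromEdgeSet {f | f ∈ G.edgeSet ∧ triDistLE G γ e f}


/-!
If `S_γ(xy)` is not a triangle-tree, then at some step of growing the ball layer by layer either an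
edge appears between two vertices that were already reached, or a new vertex is reached through two
different edges. Tracing the triangle-paths back to `xy` then exhibits a set of `v ≤ 2γ + 2`
vertices containing `x` and `y` and spanning at least `2v - 2` edges, one more than a triangle-tree
on `v` vertices has. There are at most `n ^ (v - 2) * v ^ (4v)` such configurations, each present
with probability `p ^ (2v - 2) = (d / (n - 2)) ^ (v - 1)`, so the expected number of them is
`(O(γ)) ^ O(γ) / n`, and the growth condition on `γ` makes the numerator at most `n ^ ε`.
-/

open SimpleGraph Finset

section TriangleBall

variable {V : Type*} {G : SimpleGraph V} {e : Sym2 V} {γ : ℕ}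

theorem triDistLE_mono {j k : ℕ} (hjk : j ≤ k) {f : Sym2 V} (h : triDistLE G j e f) :
    triDistLE G k e f := by
  induction hjk with
  | refl => exact h
  | step _ ih => exact Or.inl ih

theorem triDistLE_self (k : ℕ) : triDistLE G k e e :=
  triDistLE_mono k.zero_le rfl

theorem triBall_adj {u v : V} :
    (triBall G γ e).Adj u v ↔ G.Adj u v ∧ triDistLE G γ e s(u, v) := by
  rw [triBall, fromEdgeSet_adj, Set.mem_ofPred_eq, mem_edgeSet]
  exact ⟨fun h => h.1, fun h => ⟨h, h.1.ne⟩⟩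

theorem mem_edgeSet_triBall {f : Sym2 V} :
    f ∈ (triBall G γ e).edgeSet ↔ f ∈ G.edgeSet ∧ triDistLE G γ e f := by
  induction f using Sym2.ind with
  | h u v => exact triBall_adj

theorem triBall_le : triBall G γ e ≤ G := fun _ _ h => (triBall_adj.1 h).1

theorem triBall_mono {γ' : ℕ} (h : γ ≤ γ') : triBall G γ e ≤ triBall G γ' e := fun _ _ huv =>
  triBall_adj.2 ⟨(triBall_adj.1 huv).1, triDistLE_mono h (triBall_adj.1 huv).2⟩

theorem triBall_zero (he : e ∈ G.edgeSet) : triBall G 0 e = fromEdgeSet {e} := by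
  rw [triBall]
  congr
  ext f
  exact ⟨fun h => h.2.symm, fun h => ⟨h ▸ he, h.symm⟩⟩

theorem shareTri_mk_iff {a b : V} {f : Sym2 V} :
    ShareTri G s(a, b) f ↔ G.Adj a b ∧
      ∃ w, G.Adj a w ∧ G.Adj b w ∧ (f = s(a, b) ∨ f = s(a, w) ∨ f = s(b, w)) := by
  classical
  constructor
  · rintro ⟨hab, hf, t, ht, habt, hft⟩
    have hab : G.Adj a b := hab
    have ha : a ∈ t := habt a (Sym2.mem_mk_left a b)
    have hb : b ∈ t.erase a := mem_erase.2 ⟨hab.ne.symm, habt b (Sym2.mem_mk_right a b)⟩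
    obtain ⟨w, hw⟩ : ∃ w, (t.erase a).erase b = {w} := card_eq_one.1 <| by
      rw [card_erase_of_mem hb, card_erase_of_mem ha, ht.card_eq]
    have htw : t = {a, b, w} := by rw [← hw, insert_erase hb, insert_erase ha]
    rw [htw, mem_cliqueSet_iff, is3Clique_triple_iff] at ht
    refine ⟨hab, w, ht.2.1, ht.2.2, ?_⟩
    induction f using Sym2.ind with
    | h u v =>
      have huv : u ≠ v := G.ne_of_adj hf
      have hu := hft u (Sym2.mem_mk_left u v)
      have hv := hft v (Sym2.mem_mk_right u v)
      simp only [htw, mem_insert, mem_singleton] at hu hv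
      rcases hu with rfl | rfl | rfl <;> rcases hv with rfl | rfl | rfl <;>
        simp_all [Sym2.eq_swap]
  · rintro ⟨hab, w, haw, hbw, hf⟩
    refine ⟨hab, by rcases hf with rfl | rfl | rfl <;> assumption, {a, b, w},
      is3Clique_triple_iff.2 ⟨hab, haw, hbw⟩, by simp, ?_⟩
    rcases hf with rfl | rfl | rfl <;> simp

theorem triDistLE_succ_of_adj {a b c : V} (hd : triDistLE G γ e s(a, b)) (hab : G.Adj a b)
    (hac : G.Adj a c) (hbc : G.Adj b c) : triDistLE G (γ + 1) e s(a, c) :=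
  Or.inr ⟨s(a, b), hd, shareTri_mk_iff.2 ⟨hab, c, hac, hbc, Or.inr (Or.inl rfl)⟩⟩

def IsBase (H G : SimpleGraph V) (a b c : V) : Prop :=
  H.Adj a b ∧ G.Adj a c ∧ G.Adj b c

theorem IsBase.symm {H : SimpleGraph V} {a b c : V} (h : IsBase H G a b c) : IsBase H G b a c :=
  ⟨h.1.symm, h.2.2, h.2.1⟩

theorem IsBase.adj_triBall_succ {a b c : V} (h : IsBase (triBall G γ e) G a b c) :
    (triBall G (γ + 1) e).Adj a c :=
  have ⟨hab, hd⟩ := triBall_adj.1 h.1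
  triBall_adj.2 ⟨h.2.1, triDistLE_succ_of_adj hd hab h.2.1 h.2.2⟩

end TriangleBall

section TightSpan

variable {V : Type*} {G H H' : SimpleGraph V} {x y : V} {S : Finset V}
  {F : Finset (Sym2 V)} {M : ℕ}

/-- `#F = 2 #S - 3` is the number of edges of a triangle-tree on `#S` vertices. -/
structure IsTightSpan (H : SimpleGraph V) (x y : V) (S : Finset V) (F : Finset (Sym2 V)) :
    Prop where
  left_mem : x ∈ S
  right_mem : y ∈ S
  subset_support : ↑S ⊆ H.support
  subset_sym2 : F ⊆ S.sym2
  subset_edgeSet : ↑F ⊆ H.edgeSet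
  card_add_three : #F + 3 = 2 * #S

def HasDenseSet (G : SimpleGraph V) (x y : V) (M : ℕ) : Prop :=
  ∃ S : Finset V, ∃ F ⊆ S.sym2, x ∈ S ∧ y ∈ S ∧ #S ≤ M ∧ ↑F ⊆ G.edgeSet ∧ 2 * #S ≤ #F + 2

theorem HasDenseSet.mono {M' : ℕ} (h : HasDenseSet G x y M) (hM : M ≤ M') :
    HasDenseSet G x y M' :=
  let ⟨S, F, hF, hx, hy, hS, hFG, hcard⟩ := h
  ⟨S, F, hF, hx, hy, hS.trans hM, hFG, hcard⟩

theorem IsTightSpan.mono (h : IsTightSpan H x y S F) (hH : H ≤ H') : IsTightSpan H' x y S F where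
  left_mem := h.left_mem
  right_mem := h.right_mem
  subset_support := h.subset_support.trans (support_mono hH)
  subset_sym2 := h.subset_sym2
  subset_edgeSet := h.subset_edgeSet.trans (edgeSet_mono hH)
  card_add_three := h.card_add_three

theorem isTightSpan_pair [DecidableEq V] (h : H.Adj x y) : IsTightSpan H x y {x, y} {s(x, y)} where
  left_mem := mem_insert_self x _
  right_mem := mem_insert_of_mem (mem_singleton_self y)
  subset_support := by
    simp only [coe_insert, coe_singleton, Set.insert_subset_iff, Set.singleton_subset_iff]
    exact ⟨⟨y, h⟩, ⟨x, h.symm⟩⟩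
  subset_sym2 := by simp [mem_sym2_iff]
  subset_edgeSet := by simpa using h
  card_add_three := by rw [card_singleton, card_pair h.ne]

theorem IsTightSpan.insert_of_adj [DecidableEq V] (h : IsTightSpan H x y S F) {a b w : V}
    (ha : a ∈ S) (hb : b ∈ S) (hw : w ∉ S) (hab : a ≠ b) (haw : H.Adj a w) (hbw : H.Adj b w) :
    IsTightSpan H x y (insert w S) (insert s(a, w) (insert s(b, w) F)) where
  left_mem := mem_insert_of_mem h.left_mem
  right_mem := mem_insert_of_mem h.right_mem
  subset_support := by
    rw [coe_insert, Set.insert_subset_iff]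
    exact ⟨⟨a, haw.symm⟩, h.subset_support⟩
  subset_sym2 := by
    refine insert_subset ?_ (insert_subset ?_ (h.subset_sym2.trans (sym2_mono (subset_insert _ _))))
      <;> simp [mem_sym2_iff, ha, hb]
  subset_edgeSet := by
    simp only [coe_insert, Set.insert_subset_iff]
    exact ⟨haw, hbw, h.subset_edgeSet⟩
  card_add_three := by
    have hnotF : ∀ c, s(c, w) ∉ F := fun c hc =>
      hw (mem_sym2_iff.1 (h.subset_sym2 hc) w (Sym2.mem_mk_right c w))
    have hne : s(a, w) ≠ s(b, w) := fun h => hab (Sym2.congr_left.1 h)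
    rw [card_insert_of_notMem (by simp [hne, hnotF]), card_insert_of_notMem (hnotF b),
      card_insert_of_notMem hw]
    linarith [h.card_add_three]

theorem IsTightSpan.hasDenseSet (h : IsTightSpan H x y S F) (hHG : H ≤ G) {f : Sym2 V}
    (hf : f ∈ G.edgeSet) (hfS : f ∈ S.sym2) (hfF : f ∉ F) (hM : #S ≤ M) :
    HasDenseSet G x y M := by
  classical
  refine ⟨S, insert f F, insert_subset hfS h.subset_sym2, h.left_mem, h.right_mem, hM, ?_, ?_⟩
  · rw [coe_insert, Set.insert_subset_iff]
    exact ⟨hf, h.subset_edgeSet.trans (edgeSet_mono hHG)⟩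
  · rw [card_insert_of_notMem hfF]
    linarith [h.card_add_three]

end TightSpan

section Obstructions

variable {V : Type*} {G : SimpleGraph V} {x y : V} {γ : ℕ}

theorem IsTightSpan.exists_superset_of_triDistLE {K k : ℕ} (hk : k ≤ K) {f : Sym2 V}
    (hf : triDistLE G k s(x, y) f) {S : Finset V} {F : Finset (Sym2 V)}
    (h : IsTightSpan (triBall G K s(x, y)) x y S F) :
    ∃ S' F', IsTightSpan (triBall G K s(x, y)) x y S' F' ∧ S ⊆ S' ∧ f ∈ S'.sym2 ∧
      #S' ≤ #S + k := by
  classical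
  induction k generalizing f with
  | zero =>
    subst hf
    exact ⟨S, F, h, subset_rfl, by simp [mem_sym2_iff, h.left_mem, h.right_mem], le_rfl⟩
  | succ k ih =>
    rcases hf with hf | ⟨g, hg, hgf⟩
    · obtain ⟨S', F', h', hSS', hf', hcard⟩ := ih (by omega) hf
      exact ⟨S', F', h', hSS', hf', by omega⟩
    induction g using Sym2.ind with
    | h a b =>
    obtain ⟨S₁, F₁, h₁, hSS₁, hab₁, hcard₁⟩ := ih (by omega) hg
    obtain ⟨hab, w, haw, hbw, hf⟩ := shareTri_mk_iff.1 hgf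
    have ha : a ∈ S₁ := mem_sym2_iff.1 hab₁ a (Sym2.mem_mk_left a b)
    have hb : b ∈ S₁ := mem_sym2_iff.1 hab₁ b (Sym2.mem_mk_right a b)
    have hfT : ∀ T : Finset V, a ∈ T → b ∈ T → w ∈ T → f ∈ T.sym2 := fun T ha hb hw => by
      rcases hf with rfl | rfl | rfl <;> simp [mem_sym2_iff, ha, hb, hw]
    by_cases hw : w ∈ S₁
    · exact ⟨S₁, F₁, h₁, hSS₁, hfT S₁ ha hb hw, by omega⟩
    have hbase : IsBase (triBall G k s(x, y)) G a b w := ⟨triBall_adj.2 ⟨hab, hg⟩, haw, hbw⟩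
    refine ⟨insert w S₁, _, h₁.insert_of_adj ha hb hw hab.ne
      (triBall_mono hk hbase.adj_triBall_succ) (triBall_mono hk hbase.symm.adj_triBall_succ),
      hSS₁.trans (subset_insert w S₁), hfT _ (mem_insert_of_mem ha) (mem_insert_of_mem hb)
      (mem_insert_self w S₁), ?_⟩
    rw [card_insert_of_notMem hw]
    omega

theorem exists_isTightSpan_of_mem_edgeSet (hxy : G.Adj x y) {g₁ g₂ : Sym2 V}
    (h₁ : g₁ ∈ (triBall G γ s(x, y)).edgeSet) (h₂ : g₂ ∈ (triBall G γ s(x, y)).edgeSet) :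
    ∃ S F, IsTightSpan (triBall G γ s(x, y)) x y S F ∧ g₁ ∈ S.sym2 ∧ g₂ ∈ S.sym2 ∧
      #S ≤ 2 * γ + 2 := by
  classical
  have h₀ := isTightSpan_pair (triBall_adj.2 ⟨hxy, triDistLE_self (G := G) (e := s(x, y)) γ⟩)
  obtain ⟨S₁, F₁, hS₁, -, hg₁, hcard₁⟩ :=
    h₀.exists_superset_of_triDistLE le_rfl (mem_edgeSet_triBall.1 h₁).2
  obtain ⟨S₂, F₂, hS₂, hS₁₂, hg₂, hcard₂⟩ :=
    hS₁.exists_superset_of_triDistLE le_rfl (mem_edgeSet_triBall.1 h₂).2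
  rw [card_pair hxy.ne] at hcard₁
  exact ⟨S₂, F₂, hS₂, sym2_mono hS₁₂ hg₁, hg₂, by omega⟩

theorem hasDenseSet_of_chord (hxy : G.Adj x y) {u v : V}
    (huv : (triBall G (γ + 1) s(x, y)).Adj u v) (hnew : ¬(triBall G γ s(x, y)).Adj u v)
    (hu : u ∈ (triBall G γ s(x, y)).support) (hv : v ∈ (triBall G γ s(x, y)).support) :
    HasDenseSet G x y (2 * γ + 2) := by
  obtain ⟨u', hu'⟩ := hu
  obtain ⟨v', hv'⟩ := hv
  obtain ⟨S, F, hS, hu'S, hv'S, hcard⟩ := exists_isTightSpan_of_mem_edgeSet hxy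
    (mem_edgeSet _ |>.2 hu') (mem_edgeSet _ |>.2 hv')
  have huS := mem_sym2_iff.1 hu'S u (Sym2.mem_mk_left u u')
  have hvS := mem_sym2_iff.1 hv'S v (Sym2.mem_mk_left v v')
  refine hS.hasDenseSet triBall_le (triBall_le huv) (by simp [mem_sym2_iff, huS, hvS])
    (fun hF => hnew ((mem_edgeSet _).1 (hS.subset_edgeSet hF))) hcard

theorem hasDenseSet_of_two_bases (hxy : G.Adj x y) {a b a' b' c : V}
    (hc : c ∉ (triBall G γ s(x, y)).support) (h : IsBase (triBall G γ s(x, y)) G a b c)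
    (h' : IsBase (triBall G γ s(x, y)) G a' b' c) (hne : s(a, b) ≠ s(a', b')) :
    HasDenseSet G x y (2 * γ + 3) := by
  classical
  obtain ⟨S, F, hS, habS, habS', hcard⟩ := exists_isTightSpan_of_mem_edgeSet hxy
    (mem_edgeSet _ |>.2 h.1) (mem_edgeSet _ |>.2 h'.1)
  have hcS : c ∉ S := fun hcS => hc (hS.subset_support hcS)
  obtain ⟨z, hz', hz⟩ : ∃ z ∈ s(a', b'), z ∉ s(a, b) := by
    by_contra! hsub
    exact hne ((Sym2.mem_and_mem_iff h'.1.ne).1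
      ⟨hsub a' (Sym2.mem_mk_left _ _), hsub b' (Sym2.mem_mk_right _ _)⟩)
  have hzc : G.Adj z c := by rcases Sym2.mem_iff.1 hz' with rfl | rfl; exacts [h'.2.1, h'.2.2]
  have hzS : z ∈ S := mem_sym2_iff.1 habS' z hz'
  have haS : a ∈ S := mem_sym2_iff.1 habS a (Sym2.mem_mk_left a b)
  have hbS : b ∈ S := mem_sym2_iff.1 habS b (Sym2.mem_mk_right a b)
  have hS' := (hS.mono (triBall_mono γ.le_succ)).insert_of_adj haS hbS hcS h.1.ne
    h.adj_triBall_succ h.symm.adj_triBall_succ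
  refine hS'.hasDenseSet triBall_le ((mem_edgeSet _).2 hzc) ?_ ?_
    (by rw [card_insert_of_notMem hcS]; omega)
  · simp [mem_sym2_iff, hzS]
  · simp only [Sym2.mem_iff, not_or] at hz
    simp only [mem_insert, Sym2.congr_left, hz, false_or]
    exact fun hF => hcS (mem_sym2_iff.1 (hS.subset_sym2 hF) c (Sym2.mem_mk_right z c))

end Obstructions

section Growth

variable {V : Type*} {G : SimpleGraph V} {e : Sym2 V} {γ : ℕ}

theorem exists_isBase_of_adj_triBall_succ {u c : V} (huc : (triBall G (γ + 1) e).Adj u c)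
    (hnew : ¬(triBall G γ e).Adj u c) (hc : c ∉ (triBall G γ e).support) :
    ∃ a b, IsBase (triBall G γ e) G a b c ∧ (u = a ∨ u = b) := by
  obtain ⟨huc, hd | ⟨g, hg, hshare⟩⟩ := triBall_adj.1 huc
  · exact absurd (triBall_adj.2 ⟨huc, hd⟩) hnew
  induction g using Sym2.ind with
  | h a b =>
  obtain ⟨hab, w, haw, hbw, hf⟩ := shareTri_mk_iff.1 hshare
  have hab : (triBall G γ e).Adj a b := triBall_adj.2 ⟨hab, hg⟩
  have ha : c ≠ a := fun h => hc (h ▸ ⟨b, hab⟩)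
  have hb : c ≠ b := fun h => hc (h ▸ ⟨a, hab.symm⟩)
  rcases hf with hf | hf | hf <;> simp only [Sym2.eq_iff] at hf
  · exact (hf.elim (fun h => hb h.2) (fun h => ha h.2)).elim
  · rcases hf with ⟨rfl, rfl⟩ | ⟨-, h⟩
    exacts [⟨u, b, ⟨hab, haw, hbw⟩, Or.inl rfl⟩, absurd h ha]
  · rcases hf with ⟨rfl, rfl⟩ | ⟨-, h⟩
    exacts [⟨a, u, ⟨hab, haw, hbw⟩, Or.inr rfl⟩, absurd h hb]

theorem exists_isBase_of_mem_support {c : V}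
    (hc : c ∈ (triBall G (γ + 1) e).support \ (triBall G γ e).support) :
    ∃ a b, IsBase (triBall G γ e) G a b c :=
  let ⟨u, hcu⟩ := hc.1
  let ⟨a, b, hab, _⟩ :=
    exists_isBase_of_adj_triBall_succ hcu.symm (fun h => hc.2 ⟨u, h.symm⟩) hc.2
  ⟨a, b, hab⟩

theorem triBall_succ_eq
    (hchord : ∀ u v, (triBall G (γ + 1) e).Adj u v → ¬(triBall G γ e).Adj u v →
      u ∈ (triBall G γ e).support → v ∉ (triBall G γ e).support)
    (hbase : ∀ c a b a' b', c ∉ (triBall G γ e).support → IsBase (triBall G γ e) G a b c →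
      IsBase (triBall G γ e) G a' b' c → s(a, b) = s(a', b'))
    {a b : V → V}
    (hab : ∀ c ∈ (triBall G (γ + 1) e).support \ (triBall G γ e).support,
      IsBase (triBall G γ e) G (a c) (b c) c) :
    triBall G (γ + 1) e = triBall G γ e ⊔ fromEdgeSet
      (⋃ c ∈ (triBall G (γ + 1) e).support \ (triBall G γ e).support, {s(a c, c), s(b c, c)}) := by
  have key : ∀ u v, (triBall G (γ + 1) e).Adj u v → ¬(triBall G γ e).Adj u v →
      v ∉ (triBall G γ e).support → ∃ c ∈ (triBall G (γ + 1) e).support \ (triBall G γ e).support,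
        s(u, v) = s(a c, c) ∨ s(u, v) = s(b c, c) := by
    intro u v huv hnew hv
    have hv' : v ∈ (triBall G (γ + 1) e).support \ (triBall G γ e).support := ⟨⟨u, huv.symm⟩, hv⟩
    obtain ⟨a', b', hab', hu⟩ := exists_isBase_of_adj_triBall_succ huv hnew hv
    have hu : u ∈ s(a v, b v) := hbase v _ _ _ _ hv (hab v hv') hab' ▸ Sym2.mem_iff.2 hu
    refine ⟨v, hv', ?_⟩
    rcases Sym2.mem_iff.1 hu with rfl | rfl <;> simp
  ext u v
  simp only [sup_adj, fromEdgeSet_adj, Set.mem_iUnion, Set.mem_insert_iff, Set.mem_singleton_iff,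
    exists_prop]
  constructor
  · intro huv
    refine or_iff_not_imp_left.2 fun hnew => ⟨?_, huv.ne⟩
    by_cases hu : u ∈ (triBall G γ e).support
    · exact key u v huv hnew (hchord u v huv hnew hu)
    · simpa only [Sym2.eq_swap (a := u)] using key v u huv.symm (fun h => hnew h.symm) hu
  · rintro (huv | ⟨⟨c, hc, huv | huv⟩, -⟩)
    · exact triBall_mono γ.le_succ huv
    · exact (mem_edgeSet _).1 (huv ▸ (mem_edgeSet _).2 (hab c hc).adj_triBall_succ)
    · exact (mem_edgeSet _).1 (huv ▸ (mem_edgeSet _).2 (hab c hc).symm.adj_triBall_succ)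

theorem IsTriTree.sup_fromEdgeSet_biUnion {T : SimpleGraph V} (hT : IsTriTree T) {C : Set V}
    (hC : C.Finite) {a b : V → V} (hadj : ∀ c ∈ C, T.Adj (a c) (b c))
    (hnew : ∀ c ∈ C, c ∉ T.support) :
    IsTriTree (T ⊔ fromEdgeSet (⋃ c ∈ C, {s(a c, c), s(b c, c)})) := by
  induction C, hC using Set.Finite.induction_on with
  | empty => simpa using hT
  | @insert c C hcC _ ih =>
    simp only [Set.mem_insert_iff, forall_eq_or_imp] at hadj hnew
    rw [Set.biUnion_insert, fromEdgeSet_union, sup_comm (fromEdgeSet _), ← sup_assoc]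
    refine (ih hadj.2 hnew.2).grow _ _ _ _ (Or.inl hadj.1) ?_
    rintro ⟨w, hcw | ⟨hcw, -⟩⟩
    · exact hnew.1 ⟨w, hcw⟩
    simp only [Sym2.toRel_prop, Set.mem_iUnion, Set.mem_insert_iff, Set.mem_singleton_iff,
      exists_prop] at hcw
    obtain ⟨c', hc', hcw | hcw⟩ := hcw <;>
      rcases Sym2.eq_iff.1 hcw with ⟨rfl, -⟩ | ⟨rfl, -⟩
    · exact hnew.1 ⟨b c', (hadj.2 c' hc')⟩
    · exact hcC hc'
    · exact hnew.1 ⟨a c', (hadj.2 c' hc').symm⟩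
    · exact hcC hc'

theorem isTriTree_triBall_succ [Finite V] (hT : IsTriTree (triBall G γ e))
    (hchord : ∀ u v, (triBall G (γ + 1) e).Adj u v → ¬(triBall G γ e).Adj u v →
      u ∈ (triBall G γ e).support → v ∉ (triBall G γ e).support)
    (hbase : ∀ c a b a' b', c ∉ (triBall G γ e).support → IsBase (triBall G γ e) G a b c →
      IsBase (triBall G γ e) G a' b' c → s(a, b) = s(a', b')) :
    IsTriTree (triBall G (γ + 1) e) := by
  have : Nonempty V := e.inductionOn fun u _ => ⟨u⟩
  choose! a b hab using fun c => @exists_isBase_of_mem_support _ G e γ c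
  rw [triBall_succ_eq hchord hbase hab]
  exact hT.sup_fromEdgeSet_biUnion (Set.toFinite _) (fun c hc => (hab c hc).1) fun c hc => hc.2

end Growth

theorem isTriTree_triBall_or_hasDenseSet {V : Type*} [Finite V] {G : SimpleGraph V} {x y : V}
    (hxy : G.Adj x y) (γ : ℕ) :
    IsTriTree (triBall G γ s(x, y)) ∨ HasDenseSet G x y (2 * γ + 2) := by
  induction γ with
  | zero => exact Or.inl (triBall_zero ((mem_edgeSet G).2 hxy) ▸ IsTriTree.single x y hxy.ne)
  | succ γ ih =>
    obtain hT | hD := ih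
    · refine or_iff_not_imp_right.2 fun hD => isTriTree_triBall_succ hT ?_ ?_
      · exact fun u v huv hnew hu hv =>
          hD ((hasDenseSet_of_chord hxy huv hnew hu hv).mono (by omega))
      · exact fun c a b a' b' hc h h' => by_contra fun hne =>
          hD ((hasDenseSet_of_two_bases hxy hc h h' hne).mono (by omega))
    · exact Or.inr (hD.mono (by omega))

section FirstMoment

instance isFiniteMeasure_berBool (p : ℝ) : IsFiniteMeasure (berBool p) :=
  ⟨by simp [berBool]⟩

theorem berBool_univ {p : ℝ} (hp0 : 0 ≤ p) (hp1 : p ≤ 1) : berBool p Set.univ = 1 := by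
  simp [berBool, ← ENNReal.ofReal_add hp0 (sub_nonneg.2 hp1)]

theorem erMeasure_forall_eq_true {n : ℕ} {p : ℝ} (hp0 : 0 ≤ p) (hp1 : p ≤ 1)
    (F : Finset (Sym2 (Fin n))) :
    erMeasure n p {ω | ∀ e ∈ F, ω e = true} = ENNReal.ofReal (p ^ #F) := by
  classical
  have hpi : {ω : Sym2 (Fin n) → Bool | ∀ e ∈ F, ω e = true} =
      Set.univ.pi fun e => if e ∈ F then {true} else Set.univ := by
    ext ω
    simp only [Set.mem_ofPred_eq, Set.mem_pi, Set.mem_univ, true_implies]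
    exact forall_congr' fun e => by split_ifs <;> simp [*]
  rw [hpi, erMeasure, Measure.pi_pi]
  calc ∏ e, berBool p (if e ∈ F then {true} else Set.univ)
      = ∏ e, if e ∈ F then ENNReal.ofReal p else 1 :=
        prod_congr rfl fun e _ => by
          split_ifs
          exacts [by simp [berBool], berBool_univ hp0 hp1]
    _ = ENNReal.ofReal (p ^ #F) := by
        rw [prod_ite_mem, univ_inter, prod_const, ENNReal.ofReal_pow hp0]

theorem card_filter_pair_mem_powersetCard_le {α : Type*} [Fintype α] [DecidableEq α] {x y : α}
    (hxy : x ≠ y) (v : ℕ) :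
    #{S ∈ powersetCard v univ | x ∈ S ∧ y ∈ S} ≤ Fintype.card α ^ (v - 2) := by
  calc #{S ∈ powersetCard v univ | x ∈ S ∧ y ∈ S}
      ≤ #((powersetCard (v - 2) (univ : Finset α)).image fun T => insert x (insert y T)) := by
        refine card_le_card fun S hS => mem_image.2 ⟨(S.erase x).erase y, ?_, ?_⟩ <;>
          obtain ⟨⟨-, hS⟩, hx, hy⟩ := mem_filter.1 hS |>.imp_left mem_powersetCard.1
        · have hy' : y ∈ S.erase x := mem_erase.2 ⟨hxy.symm, hy⟩
          rw [mem_powersetCard, card_erase_of_mem hy', card_erase_of_mem hx, hS]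
          exact ⟨subset_univ _, rfl⟩
        · rw [insert_erase (mem_erase.2 ⟨hxy.symm, hy⟩), insert_erase hx]
    _ ≤ #(powersetCard (v - 2) (univ : Finset α)) := card_image_le
    _ = (Fintype.card α).choose (v - 2) := by rw [card_powersetCard, card_univ]
    _ ≤ Fintype.card α ^ (v - 2) := Nat.choose_le_pow _ _

theorem card_powersetCard_sym2_le {α : Type*} {S : Finset α} {v : ℕ} (hS : #S = v) :
    #(powersetCard (2 * v - 2) S.sym2) ≤ v ^ (4 * v) := by
  rcases v.eq_zero_or_pos with rfl | hv
  · simp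
  have hsym2 : #S.sym2 ≤ v * v := by
    rw [card_sym2, hS, Nat.choose_two_right, Nat.add_sub_cancel]
    exact Nat.div_le_of_le_mul (by nlinarith)
  calc #(powersetCard (2 * v - 2) S.sym2)
      ≤ (v * v) ^ (2 * v - 2) := by
        rw [card_powersetCard]
        exact (Nat.choose_le_pow _ _).trans (Nat.pow_le_pow_left hsym2 _)
    _ ≤ v ^ (4 * v) := by
        rw [← pow_two, ← pow_mul]
        exact Nat.pow_le_pow_right hv (by omega)

theorem setOf_hasDenseSet_subset {n : ℕ} {x y : Fin n} (hxy : x ≠ y) (M : ℕ) :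
    {ω | HasDenseSet (erGraph n ω) x y M} ⊆
      ⋃ v ∈ Icc 2 M, ⋃ S ∈ {S ∈ powersetCard v (univ : Finset (Fin n)) | x ∈ S ∧ y ∈ S},
        ⋃ F ∈ powersetCard (2 * v - 2) S.sym2, {ω | ∀ e ∈ F, ω e = true} := by
  rintro ω ⟨S, F, hFS, hx, hy, hSM, hFG, hcard⟩
  obtain ⟨F', hF'F, hF'⟩ := exists_subset_card_eq (show 2 * #S - 2 ≤ #F by omega)
  have h2S : 2 ≤ #S := card_pair hxy ▸ card_le_card (insert_subset hx (singleton_subset_iff.2 hy))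
  simp only [Set.mem_iUnion, mem_Icc, mem_filter, mem_powersetCard, exists_prop]
  refine ⟨#S, ⟨h2S, hSM⟩, S, ⟨⟨subset_univ S, rfl⟩, hx, hy⟩, F', ⟨hF'F.trans hFS, hF'⟩,
    fun e he => ?_⟩
  have he := hFG (hF'F he)
  induction e using Sym2.ind with
  | h u v => exact he.2

theorem erMeasure_hasDenseSet_le {n : ℕ} {p : ℝ} (hp0 : 0 ≤ p) (hp1 : p ≤ 1) {x y : Fin n}
    (hxy : x ≠ y) (M : ℕ) :
    erMeasure n p {ω | HasDenseSet (erGraph n ω) x y M} ≤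
      ENNReal.ofReal (∑ v ∈ Icc 2 M, ((n ^ (v - 2) * v ^ (4 * v) : ℕ) : ℝ) * p ^ (2 * v - 2)) := by
  rw [ENNReal.ofReal_sum_of_nonneg fun v _ => by positivity]
  refine (measure_mono (setOf_hasDenseSet_subset hxy M)).trans <|
    (measure_biUnion_finset_le _ _).trans <| sum_le_sum fun v _ => ?_
  rw [ENNReal.ofReal_mul (by positivity), ENNReal.ofReal_natCast, Nat.cast_mul, mul_assoc]
  refine (measure_biUnion_finset_le _ _).trans <| (sum_le_card_nsmul _ _
    ((v ^ (4 * v) : ℕ) * ENNReal.ofReal (p ^ (2 * v - 2))) fun S hS => ?_).trans ?_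
  · calc erMeasure n p (⋃ F ∈ powersetCard (2 * v - 2) S.sym2, {ω | ∀ e ∈ F, ω e = true})
        ≤ ∑ F ∈ powersetCard (2 * v - 2) S.sym2, erMeasure n p {ω | ∀ e ∈ F, ω e = true} :=
          measure_biUnion_finset_le _ _
      _ = #(powersetCard (2 * v - 2) S.sym2) * ENNReal.ofReal (p ^ (2 * v - 2)) := by
          rw [← nsmul_eq_mul, ← sum_const]
          exact sum_congr rfl fun F hF => by
            rw [erMeasure_forall_eq_true hp0 hp1, (mem_powersetCard.1 hF).2]
      _ ≤ _ := by
          gcongr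
          exact_mod_cast card_powersetCard_sym2_le (mem_powersetCard.1 (mem_filter.1 hS).1).2
  · rw [nsmul_eq_mul]
    gcongr
    simpa using card_filter_pair_mem_powersetCard_le hxy v

end FirstMoment

section Asymptotics

open Real

theorem firstMoment_term_le {n v M : ℕ} {p K : ℝ} (hn : 0 < n) (hK : 1 ≤ K)
    (hnp : n * p ^ 2 ≤ K) (hv : 2 ≤ v) (hvM : v ≤ M) :
    ((n ^ (v - 2) * v ^ (4 * v) : ℕ) : ℝ) * p ^ (2 * v - 2) ≤ M ^ (4 * M) * K ^ M / n := by
  obtain ⟨k, rfl⟩ : ∃ k, v = k + 2 := ⟨v - 2, by omega⟩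
  have hM : ((k + 2 : ℕ) : ℝ) ≤ M := by exact_mod_cast hvM
  calc ((n ^ (k + 2 - 2) * (k + 2) ^ (4 * (k + 2)) : ℕ) : ℝ) * p ^ (2 * (k + 2) - 2)
      = ((k + 2 : ℕ) : ℝ) ^ (4 * (k + 2)) * ((n * p ^ 2) ^ (k + 1) / n) := by
        rw [show k + 2 - 2 = k by omega, show 2 * (k + 2) - 2 = 2 * (k + 1) by omega]
        field_simp
        push_cast
        ring
    _ ≤ (M : ℝ) ^ (4 * M) * (K ^ M / n) := by
        gcongr
        · calc ((k + 2 : ℕ) : ℝ) ^ (4 * (k + 2)) ≤ (M : ℝ) ^ (4 * (k + 2)) := by gcongr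
            _ ≤ (M : ℝ) ^ (4 * M) :=
              pow_le_pow_right₀ (by exact_mod_cast (by omega : 1 ≤ M)) (by omega)
        · exact (pow_le_pow_left₀ (by positivity) hnp _).trans (pow_le_pow_right₀ hK (by omega))
    _ = M ^ (4 * M) * K ^ M / n := by ring

theorem sum_firstMoment_term_le {n M : ℕ} {p K : ℝ} (hn : 0 < n) (hK : 1 ≤ K)
    (hnp : n * p ^ 2 ≤ K) :
    ∑ v ∈ Icc 2 M, ((n ^ (v - 2) * v ^ (4 * v) : ℕ) : ℝ) * p ^ (2 * v - 2) ≤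
      (K * M) ^ (5 * M) / n := by
  rcases M.eq_zero_or_pos with rfl | hM
  · simp
  have hM' : (1 : ℝ) ≤ M := by exact_mod_cast hM
  calc ∑ v ∈ Icc 2 M, ((n ^ (v - 2) * v ^ (4 * v) : ℕ) : ℝ) * p ^ (2 * v - 2)
      ≤ #(Icc 2 M) • (M ^ (4 * M) * K ^ M / n) := sum_le_card_nsmul _ _ _ fun v hv =>
        firstMoment_term_le hn hK hnp (mem_Icc.1 hv).1 (mem_Icc.1 hv).2
    _ ≤ M * (M ^ (4 * M) * K ^ M / n) := by
        rw [nsmul_eq_mul, Nat.card_Icc]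
        gcongr
        exact_mod_cast Nat.sub_le_of_le_add (by omega)
    _ ≤ (K * M) ^ (5 * M) / n := by
        rw [mul_pow, ← mul_div_assoc]
        refine div_le_div_of_nonneg_right ?_ n.cast_nonneg
        calc (M : ℝ) * (M ^ (4 * M) * K ^ M) ≤ M ^ M * (M ^ (4 * M) * K ^ (5 * M)) := by
              gcongr ?_ * (_ * ?_)
              exacts [le_self_pow₀ hM' hM.ne', pow_le_pow_right₀ hK (by omega)]
          _ = K ^ (5 * M) * M ^ (5 * M) := by ring

theorem eventually_mul_log_mul_le {γ : ℕ → ℕ} (hγpos : ∀ n, 0 < γ n)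
    (hγ : Tendsto (fun n : ℕ => (γ n : ℝ) * log (log n) / log n) atTop (nhds 0))
    {C δ : ℝ} (hC : 0 < C) (hδ : 0 < δ) :
    ∀ᶠ n : ℕ in atTop, (γ n : ℝ) * log (C * γ n) ≤ δ * log n := by
  have hlog : Tendsto (fun n : ℕ => log n) atTop atTop :=
    tendsto_log_atTop.comp tendsto_natCast_atTop_atTop
  filter_upwards [hlog.eventually_gt_atTop 0,
    (tendsto_log_atTop.comp hlog).eventually_ge_atTop (max 1 (log C)),
    hγ.eventually_lt_const (lt_min one_pos (half_pos hδ))] with n hl hll hq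
  simp only [Function.comp_apply, max_le_iff] at hll
  rw [div_lt_iff₀ hl] at hq
  have hq₁ : min 1 (δ / 2) * log n ≤ log n := mul_le_of_le_one_left hl.le (min_le_left _ _)
  have hq₂ : min 1 (δ / 2) * log n ≤ δ / 2 * log n :=
    mul_le_mul_of_nonneg_right (min_le_right _ _) hl.le
  have hγ0 : (0 : ℝ) < γ n := by exact_mod_cast hγpos n
  have hγl : (γ n : ℝ) ≤ log n := by nlinarith
  calc (γ n : ℝ) * log (C * γ n) = γ n * (log C + log (γ n)) := by
        rw [log_mul hC.ne' hγ0.ne']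
    _ ≤ γ n * (2 * log (log n)) := by
        gcongr
        linarith [log_le_log hγ0 hγl]
    _ ≤ δ * log n := by linarith

theorem eventually_pow_le_rpow {γ : ℕ → ℕ} (hγpos : ∀ n, 0 < γ n)
    (hγ : Tendsto (fun n : ℕ => (γ n : ℝ) * log (log n) / log n) atTop (nhds 0))
    {K ε : ℝ} (hK : 1 ≤ K) (hε : 0 < ε) :
    ∀ᶠ n : ℕ in atTop, (K * (2 * γ n + 2 : ℕ)) ^ (5 * (2 * γ n + 2)) ≤ (n : ℝ) ^ ε := by
  filter_upwards [eventually_mul_log_mul_le hγpos hγ (by positivity : (0 : ℝ) < 4 * K)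
    (by positivity : 0 < ε / 20), eventually_gt_atTop 0] with n hlog hn
  have hγ1 : (1 : ℝ) ≤ γ n := by exact_mod_cast hγpos n
  have hM : ((2 * γ n + 2 : ℕ) : ℝ) ≤ 4 * γ n := by push_cast; linarith
  rw [le_rpow_iff_log_le (by positivity) (by exact_mod_cast hn), log_pow]
  have hKM : 1 ≤ K * (2 * γ n + 2 : ℕ) := by push_cast; nlinarith
  calc ((5 * (2 * γ n + 2) : ℕ) : ℝ) * log (K * (2 * γ n + 2 : ℕ))
      ≤ (20 * γ n) * log (4 * K * γ n) := by
        refine mul_le_mul (by push_cast; linarith) (log_le_log (by positivity) ?_)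
          (log_nonneg hKM) (by positivity)
        exact (mul_le_mul_of_nonneg_left hM (by positivity)).trans_eq (by ring)
    _ ≤ ε * log n := by linarith

end Asymptotics

/-- Fix `d > 0`, `p(n) = (d/(n-2))^{1/2}` and `γ(n)` with `γ(n) log log n / log n → 0`.
Then for distinct vertices `x, y` and every `ε > 0`, for all large `n` the probability that
`xy` is an edge of `G_{n,p(n)}` and `S_{γ(n)}(xy)` is not a triangle-tree is at most
`n^{-1+ε}`. -/
theorem ball_is_tree_whp (d : ℝ) (hd : 0 < d) (γ : ℕ → ℕ) (hγpos : ∀ n, 0 < γ n)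
    (hγ : Tendsto (fun n : ℕ => (γ n : ℝ) * Real.log (Real.log n) / Real.log n)
      atTop (nhds 0))
    (x y : ℕ) (hxy : x ≠ y) (ε : ℝ) (hε : 0 < ε) :
    ∀ᶠ n : ℕ in atTop, ∀ (hx : x < n) (hy : y < n),
      erMeasure n (Real.sqrt (d / ((n : ℝ) - 2)))
          {ω | s((⟨x, hx⟩ : Fin n), (⟨y, hy⟩ : Fin n)) ∈ (erGraph n ω).edgeSet ∧
            ¬ IsTriTree
                (triBall (erGraph n ω) (γ n) s((⟨x, hx⟩ : Fin n), (⟨y, hy⟩ : Fin n)))}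
        ≤ ENNReal.ofReal ((n : ℝ) ^ (-1 + ε)) := by
  have hK : 1 ≤ 2 * d + 1 := by linarith
  filter_upwards [eventually_pow_le_rpow hγpos hγ hK hε,
    tendsto_natCast_atTop_atTop.eventually_ge_atTop (d + 4)] with n hpow hn hx hy
  have hn0 : (0 : ℝ) < n := by linarith
  set p := √(d / ((n : ℝ) - 2))
  have hp2 : p ^ 2 = d / (n - 2) := Real.sq_sqrt (div_nonneg hd.le (by linarith))
  have hp1 : p ≤ 1 := Real.sqrt_le_one.2 ((div_le_one (by linarith)).2 (by linarith))
  have hnp : n * p ^ 2 ≤ 2 * d + 1 := by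
    rw [hp2, mul_div_assoc', div_le_iff₀ (by linarith)]
    nlinarith
  have hxy' : (⟨x, hx⟩ : Fin n) ≠ ⟨y, hy⟩ := fun h => hxy (Fin.mk.inj h)
  calc _ ≤ erMeasure n p {ω | HasDenseSet (erGraph n ω) ⟨x, hx⟩ ⟨y, hy⟩ (2 * γ n + 2)} :=
        measure_mono fun ω hω => (isTriTree_triBall_or_hasDenseSet hω.1 (γ n)).resolve_left hω.2
    _ ≤ _ := erMeasure_hasDenseSet_le (Real.sqrt_nonneg _) hp1 hxy' _
    _ ≤ ENNReal.ofReal ((n : ℝ) ^ (-1 + ε)) := by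
        refine ENNReal.ofReal_le_ofReal
          ((sum_firstMoment_term_le (by exact_mod_cast hn0) hK hnp).trans ?_)
        rw [Real.rpow_add hn0, Real.rpow_neg_one, inv_mul_eq_div]
        gcongr
end
end

section
/- For all integers n ≥ 0 and c ≥ −n and every p ∈ [0,1], the total variation distance between the binomial distribution Bin(n+c, p) and the binomial distribution Bin(n, p) is at most |c|·p. -/
/-!
If `X ~ Bin(m, p)` and `ξ ~ Ber(p)` are independent then `X + ξ ~ Bin(m + 1, p)`, so the mass
function of `Bin(m + 1, p)` is `(1 - p) b + p (shiftRight b)`, where `b` is that of `Bin(m, p)`.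
Hence the two differ by `p (shiftRight b - b)`, whose `ℓ¹` norm is at most `2p`. Viewing the
mass functions as points of `ℓ¹(ℕ, ℝ)`, the triangle inequality along `m, m + 1, …, m + d`
bounds the `ℓ¹` distance between `Bin(m, p)` and `Bin(m + d, p)` by `2dp`.
-/

open Finset
open scoped lp

noncomputable def binomialMass (p : ℝ) (m k : ℕ) : ℝ := m.choose k * p ^ k * (1 - p) ^ (m - k)

variable {p : ℝ}

lemma binomialMass_eq_zero_of_lt {m k : ℕ} (h : m < k) : binomialMass p m k = 0 := by
  simp [binomialMass, Nat.choose_eq_zero_of_lt h]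

lemma binomialMass_nonneg (hp0 : 0 ≤ p) (hp1 : p ≤ 1) (m k : ℕ) :
    0 ≤ binomialMass p m k := by
  unfold binomialMass
  have : 0 ≤ 1 - p := sub_nonneg.2 hp1
  positivity

lemma binomialMass_succ_zero (p : ℝ) (m : ℕ) :
    binomialMass p (m + 1) 0 = (1 - p) * binomialMass p m 0 := by
  simp [binomialMass, pow_succ, mul_comm]

lemma binomialMass_succ_succ (p : ℝ) (m k : ℕ) :
    binomialMass p (m + 1) (k + 1) =
      (1 - p) * binomialMass p m (k + 1) + p * binomialMass p m k := by
  rcases le_or_gt (k + 1) m with hkm | hmk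
  · obtain ⟨j, rfl⟩ := Nat.exists_eq_add_of_le hkm
    simp only [binomialMass, Nat.choose_succ_succ, Nat.cast_add,
      show k + 1 + j + 1 - (k + 1) = j + 1 by omega, show k + 1 + j - (k + 1) = j by omega,
      show k + 1 + j - k = j + 1 by omega]
    ring
  · obtain rfl | hkm := (Nat.lt_succ_iff.1 hmk).eq_or_lt
    · simp [binomialMass, pow_succ, mul_comm]
    · rw [binomialMass_eq_zero_of_lt (Nat.succ_lt_succ hkm), binomialMass_eq_zero_of_lt hmk,
        binomialMass_eq_zero_of_lt hkm]
      ring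

lemma hasSum_binomialMass (p : ℝ) (m : ℕ) : HasSum (binomialMass p m) 1 := by
  have h : HasSum (binomialMass p m) (∑ k ∈ range (m + 1), binomialMass p m k) :=
    hasSum_sum_of_ne_finset_zero fun k hk =>
      binomialMass_eq_zero_of_lt (by simpa [Nat.lt_succ_iff] using hk)
  convert h using 1
  rw [← one_pow m, ← add_sub_cancel p 1, add_pow]
  refine sum_congr rfl fun k _ => ?_
  rw [binomialMass]
  ring

def shiftRight (f : ℕ → ℝ) : ℕ → ℝ
  | 0 => 0
  | k + 1 => f k

lemma HasSum.shiftRight {f : ℕ → ℝ} {a : ℝ} (h : HasSum f a) :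
    HasSum (_root_.shiftRight f) a := by
  simpa [_root_.shiftRight] using (hasSum_nat_add_iff (f := _root_.shiftRight f) 1).1 h

lemma binomialMass_succ_sub (p : ℝ) (m k : ℕ) :
    binomialMass p (m + 1) k - binomialMass p m k =
      p * (shiftRight (binomialMass p m) k - binomialMass p m k) := by
  cases k with
  | zero => rw [binomialMass_succ_zero, shiftRight]; ring
  | succ k => rw [binomialMass_succ_succ, shiftRight]; ring

lemma tsum_abs_binomialMass_succ_sub_le (hp0 : 0 ≤ p) (hp1 : p ≤ 1) (m : ℕ) :
    ∑' k, |binomialMass p (m + 1) k - binomialMass p m k| ≤ 2 * p := by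
  set b := binomialMass p m
  have hb := hasSum_binomialMass p m
  have hbound := (hb.shiftRight.add hb).mul_left p
  have hle (k : ℕ) : |binomialMass p (m + 1) k - b k| ≤ p * (shiftRight b k + b k) := by
    have hs : 0 ≤ shiftRight b k := by
      cases k with
      | zero => exact le_rfl
      | succ k => exact binomialMass_nonneg hp0 hp1 m k
    rw [binomialMass_succ_sub, abs_mul, abs_of_nonneg hp0]
    have hb : 0 ≤ b k := binomialMass_nonneg hp0 hp1 m k
    exact mul_le_mul_of_nonneg_left (abs_sub_le_iff.2 ⟨by linarith, by linarith⟩) hp0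
  have hsum := Summable.of_nonneg_of_le (fun _ => abs_nonneg _) hle hbound.summable
  linarith [hasSum_le hle hsum.hasSum hbound]

lemma memℓp_binomialMass (p : ℝ) (m : ℕ) : Memℓp (binomialMass p m) 1 := by
  refine memℓp_gen (summable_of_ne_finset_zero (s := range (m + 1)) fun k hk => ?_)
  rw [binomialMass_eq_zero_of_lt (by simpa [Nat.lt_succ_iff] using hk)]
  simp

noncomputable def binomialL1 (p : ℝ) (m : ℕ) : ℓ¹(ℕ, ℝ) :=
  ⟨binomialMass p m, memℓp_binomialMass p m⟩

lemma dist_binomialL1 (p : ℝ) (a b : ℕ) :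
    dist (binomialL1 p a) (binomialL1 p b) = ∑' k, |binomialMass p a k - binomialMass p b k| := by
  rw [dist_eq_norm, lp.norm_eq_tsum_rpow (by simp)]
  simp only [ENNReal.toReal_one, Real.rpow_one, div_one, Real.norm_eq_abs]
  rfl

lemma dist_binomialL1_le (hp0 : 0 ≤ p) (hp1 : p ≤ 1) (a b : ℕ) :
    dist (binomialL1 p a) (binomialL1 p b) ≤ 2 * |(a : ℝ) - b| * p := by
  wlog hab : a ≤ b generalizing a b
  · rw [dist_comm, abs_sub_comm]
    exact this b a (by omega)
  obtain ⟨d, rfl⟩ := Nat.exists_eq_add_of_le hab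
  have hstep (i : ℕ) : dist (binomialL1 p (a + i)) (binomialL1 p (a + (i + 1))) ≤ 2 * p := by
    rw [dist_comm, dist_binomialL1]
    exact tsum_abs_binomialMass_succ_sub_le hp0 hp1 (a + i)
  have := dist_le_range_sum_of_dist_le (f := fun i => binomialL1 p (a + i)) d fun _ => hstep _
  simp only [add_zero, sum_const, card_range, nsmul_eq_mul] at this
  simpa [mul_comm, mul_left_comm] using this

/-- For integers `n ≥ 0` and `c ≥ -n` and `p ∈ [0,1]`, the total variation distance
(half the ℓ¹ distance between the probability mass functions) between `Bin(n+c, p)` and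
`Bin(n, p)` is at most `|c| p`. -/
theorem tv_binomial_shift (n : ℕ) (c : ℤ) (hc : -(n : ℤ) ≤ c) (p : ℝ)
    (hp0 : 0 ≤ p) (hp1 : p ≤ 1) :
    (1 / 2) * ∑' k : ℕ,
        |(((n : ℤ) + c).toNat.choose k : ℝ) * p ^ k * (1 - p) ^ (((n : ℤ) + c).toNat - k)
          - (n.choose k : ℝ) * p ^ k * (1 - p) ^ (n - k)|
      ≤ |(c : ℝ)| * p := by
  set m := ((n : ℤ) + c).toNat
  have hcm : (c : ℝ) = m - n := by
    have : (m : ℤ) = n + c := Int.toNat_of_nonneg (by omega)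
    rw [← Int.cast_natCast m, this]
    push_cast
    ring
  have h := dist_binomialL1_le hp0 hp1 m n
  rw [dist_binomialL1, ← hcm] at h
  change (1 / 2) * ∑' k, |binomialMass p m k - binomialMass p n k| ≤ _
  linarith
end

section
/- Every finite simple graph H with at least one edge satisfies ν(H) ≤ |E(H)|/3 and τ(H) < |E(H)|/2. -/
noncomputable section

/-!
Edge-disjoint triangles occupy disjoint triples of edges, so `ν(H) ≤ |E(H)|/3`.
For `τ`, 2-colour the vertices: every triangle has a monochromatic edge, so the monochromatic
edges cover all triangles. Over all 2-colourings each edge is monochromatic exactly half the time,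
so on average `|E(H)|/2` edges are monochromatic; the constant colouring makes all `|E(H)| ≥ 1`
edges monochromatic, hence some colouring has strictly fewer than `|E(H)|/2`.
-/

open Finset

namespace SimpleGraph

variable {V : Type*} [Fintype V] [DecidableEq V] (G : SimpleGraph V) [DecidableRel G.Adj]

lemma choose_two_le_card_filter_mem_sym2 {r : ℕ} {s : Finset V} (hs : G.IsNClique r s) :
    r.choose 2 ≤ #{e ∈ G.edgeFinset | e ∈ s.sym2} := by
  rw [← hs.card_eq, ← Sym2.card_image_offDiag]
  refine card_le_card fun e he => ?_
  obtain ⟨⟨x, y⟩, hxy, rfl⟩ := mem_image.1 he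
  obtain ⟨hx, hy, hne⟩ := mem_offDiag.1 hxy
  exact mem_filter.2 ⟨mem_edgeFinset.2 (hs.isClique hx hy hne), mk_mem_sym2_iff.2 ⟨hx, hy⟩⟩

lemma card_mul_choose_two_le_card_edgeFinset {r : ℕ} {𝒯 : Finset (Finset V)}
    (h𝒯 : ∀ t ∈ 𝒯, G.IsNClique r t)
    (hpair : (𝒯 : Set (Finset V)).Pairwise fun a b => #(a ∩ b) ≤ 1) :
    #𝒯 * r.choose 2 ≤ #G.edgeFinset := by
  rw [← mul_one #G.edgeFinset]
  refine card_mul_le_card_mul (fun (t : Finset V) (e : Sym2 V) => e ∈ t.sym2)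
    (fun t ht => G.choose_two_le_card_filter_mem_sym2 (h𝒯 t ht)) fun e he => ?_
  refine card_le_one.2 fun a ha b hb => by_contra fun hab => ?_
  induction e using Sym2.ind with | _ x y
  simp only [mem_bipartiteBelow, mk_mem_sym2_iff] at ha hb
  have hxy : x ≠ y := G.ne_of_adj (mem_edgeFinset.1 he)
  have : 1 < #(a ∩ b) :=
    one_lt_card.2 ⟨x, mem_inter.2 ⟨ha.2.1, hb.2.1⟩, y, mem_inter.2 ⟨ha.2.2, hb.2.2⟩, hxy⟩
  exact (hpair ha.1 hb.1 hab).not_gt this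

lemma triMatchNum_mul_three_le : triMatchNum G * 3 ≤ #G.edgeFinset := by
  refine (Nat.le_div_iff_mul_le three_pos).1 (csSup_le' ?_)
  rintro _ ⟨𝒯, h𝒯, hpair, rfl⟩
  rw [Nat.le_div_iff_mul_le three_pos]
  exact G.card_mul_choose_two_le_card_edgeFinset (fun t ht => (mem_cliqueSet_iff.1 (h𝒯 t ht)))
    hpair

def monochromaticEdges (c : V → Bool) : Finset (Sym2 V) := {e ∈ G.edgeFinset | (e.map c).IsDiag}

omit [DecidableEq V] in
lemma monochromaticEdges_const (b : Bool) : G.monochromaticEdges (fun _ => b) = G.edgeFinset :=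
  filter_true_of_mem fun e _ => by induction e using Sym2.ind with | _ x y => simp

lemma exists_mem_monochromaticEdges_of_mem_cliqueSet {t : Finset V} (ht : t ∈ G.cliqueSet 3)
    (c : V → Bool) : ∃ e ∈ G.monochromaticEdges c, ∀ v ∈ e, v ∈ t := by
  obtain ⟨x, y, z, hxy, hxz, hyz, rfl⟩ := is3Clique_iff.1 (mem_cliqueSet_iff.1 ht)
  have edge {p q : V} (hpq : G.Adj p q) (hc : c p = c q) (hp : p ∈ ({x, y, z} : Finset V))
      (hq : q ∈ ({x, y, z} : Finset V)) :
      ∃ e ∈ G.monochromaticEdges c, ∀ v ∈ e, v ∈ ({x, y, z} : Finset V) :=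
    ⟨s(p, q), mem_filter.2 ⟨mem_edgeFinset.2 hpq, by simpa using hc⟩,
      fun v hv => by rcases Sym2.mem_iff.1 hv with rfl | rfl <;> assumption⟩
  have pigeonhole : c x = c y ∨ c x = c z ∨ c y = c z := by
    cases c x <;> cases c y <;> cases c z <;> simp
  rcases pigeonhole with h | h | h
  · exact edge hxy h (by simp) (by simp)
  · exact edge hxz h (by simp) (by simp)
  · exact edge hyz h (by simp) (by simp)

lemma triCoverNum_le_card_monochromaticEdges (c : V → Bool) :
    triCoverNum G ≤ #(G.monochromaticEdges c) :=
  Nat.sInf_le ⟨_, fun _ he => mem_edgeFinset.1 (mem_filter.1 he).1,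
    fun _ ht => G.exists_mem_monochromaticEdges_of_mem_cliqueSet ht c, rfl⟩

lemma two_mul_card_filter_apply_eq_apply {x y : V} (hxy : x ≠ y) :
    2 * #{c : V → Bool | c x = c y} = 2 ^ Fintype.card V := by
  -- recolouring `x` flips whether `c x = c y`
  have toggle : #{c : V → Bool | c x = c y} = #{c : V → Bool | ¬c x = c y} := by
    refine card_nbij' (fun c => Function.update c x (!c x)) (fun c => Function.update c x (!c x))
      ?_ ?_ ?_ ?_ <;> intro c <;> simp [hxy.symm, Bool.eq_not_iff]
  have := card_filter_add_card_filter_not (s := (univ : Finset (V → Bool))) (fun c => c x = c y)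
  rw [card_univ, Fintype.card_fun, Fintype.card_bool] at this
  omega

lemma two_mul_sum_card_monochromaticEdges :
    2 * ∑ c : V → Bool, #(G.monochromaticEdges c) = 2 ^ Fintype.card V * #G.edgeFinset := by
  have key (e : Sym2 V) (he : e ∈ G.edgeFinset) :
      2 * #{c : V → Bool | (e.map c).IsDiag} = 2 ^ Fintype.card V := by
    induction e using Sym2.ind with | _ x y
    simpa using two_mul_card_filter_apply_eq_apply (G.ne_of_adj (mem_edgeFinset.1 he))
  calc 2 * ∑ c : V → Bool, #(G.monochromaticEdges c)
      = 2 * ∑ e ∈ G.edgeFinset, #{c : V → Bool | (e.map c).IsDiag} :=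
        congrArg (2 * ·) (sum_card_bipartiteAbove_eq_sum_card_bipartiteBelow
          (r := fun (c : V → Bool) (e : Sym2 V) => (e.map c).IsDiag))
    _ = ∑ _e ∈ G.edgeFinset, 2 ^ Fintype.card V := by rw [mul_sum]; exact sum_congr rfl key
    _ = 2 ^ Fintype.card V * #G.edgeFinset := by rw [sum_const, smul_eq_mul, mul_comm]

lemma exists_two_mul_card_monochromaticEdges_lt (hG : G.edgeFinset.Nonempty) :
    ∃ c : V → Bool, 2 * #(G.monochromaticEdges c) < #G.edgeFinset := by
  by_contra! h
  have : ∑ _c : V → Bool, #G.edgeFinset < ∑ c : V → Bool, 2 * #(G.monochromaticEdges c) :=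
    sum_lt_sum (fun c _ => h c) ⟨fun _ => true, mem_univ _, by
      rw [monochromaticEdges_const]; have := hG.card_pos; omega⟩
  rw [← mul_sum, two_mul_sum_card_monochromaticEdges, sum_const, card_univ, Fintype.card_fun,
    Fintype.card_bool, smul_eq_mul] at this
  exact this.false

end SimpleGraph

/-- Every finite graph `H` with at least one edge satisfies `ν(H) ≤ |E(H)|/3` and
`τ(H) < |E(H)|/2`. -/
theorem nu_le_and_tau_lt {V : Type*} [Fintype V] [DecidableEq V] (H : SimpleGraph V)
    (hH : H.edgeSet.Nonempty) :
    (triMatchNum H : ℝ) ≤ (H.edgeSet.ncard : ℝ) / 3 ∧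
      (triCoverNum H : ℝ) < (H.edgeSet.ncard : ℝ) / 2 := by
  classical
  have hm : H.edgeSet.ncard = #H.edgeFinset := by
    rw [← SimpleGraph.coe_edgeFinset, Set.ncard_coe_finset]
  obtain ⟨e, he⟩ := hH
  obtain ⟨c, hc⟩ :=
    H.exists_two_mul_card_monochromaticEdges_lt ⟨e, SimpleGraph.mem_edgeFinset.2 he⟩
  have hν := H.triMatchNum_mul_three_le
  have hτ := H.triCoverNum_le_card_monochromaticEdges c
  rw [hm, le_div_iff₀ three_pos, lt_div_iff₀ two_pos]
  constructor
  · exact_mod_cast (by omega : triMatchNum H * 3 ≤ #H.edgeFinset)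
  · exact_mod_cast (by omega : triCoverNum H * 2 < #H.edgeFinset)
end
end

section
/- Let S be a finite triangle-connected simple graph with at least one edge and with no isolated vertices. Then 2·(|V(S)| − 2) ≤ |E(S)| − 1, with equality if and only if S is a triangle-tree. -/
noncomputable section

/-- `G` is triangle-connected: any two of its edges are joined by a triangle-path. -/
def TriConnected {V : Type*} (G : SimpleGraph V) : Prop :=
  ∀ e ∈ G.edgeSet, ∀ f ∈ G.edgeSet, Relation.ReflTransGen (ShareTri G) e f

/-!
Grow a vertex set `W` from the two ends of an edge of `S`. While `W ≠ V`, triangle-connectivity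
and the absence of isolated vertices give a triangle of `S` with two vertices in `W` and its
apex `w` outside; adding `w` raises `|W|` by one and the number of edges of `S` inside `W` by at
least two, the two new sides of the triangle. So `2|W| ≤ |E(S[W])| + 3` holds throughout, and if
equality holds at the end it held at every step, each step added exactly the two new sides, and
`S[W]` was built as a triangle-tree. Conversely a triangle-tree on `n` vertices has `2n - 3` edges.
-/

namespace SimpleGraph

variable {V : Type*}

/-- Unlike `G.induce W`, this is a graph on `V`, so it can be compared with `G` and with
triangle-trees in `V`. -/
def spanningInduce (G : SimpleGraph V) (W : Set V) : SimpleGraph V where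
  Adj u v := G.Adj u v ∧ u ∈ W ∧ v ∈ W
  symm := ⟨fun _ _ h => ⟨h.1.symm, h.2.2, h.2.1⟩⟩
  loopless := ⟨fun _ h => h.1.ne rfl⟩

section spanningInduce

variable {G : SimpleGraph V} {W : Set V}

@[simp]
theorem spanningInduce_adj {u v : V} : (G.spanningInduce W).Adj u v ↔ G.Adj u v ∧ u ∈ W ∧ v ∈ W :=
  Iff.rfl

theorem support_spanningInduce_subset : (G.spanningInduce W).support ⊆ W :=
  fun _ ⟨_, h⟩ => h.2.1

theorem spanningInduce_mono {W' : Set V} (h : W ⊆ W') : G.spanningInduce W ≤ G.spanningInduce W' :=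
  fun _ _ huv => ⟨huv.1, h huv.2.1, h huv.2.2⟩

@[simp]
theorem spanningInduce_univ : G.spanningInduce Set.univ = G := by
  ext; simp

theorem spanningInduce_pair_of_adj {x y : V} (h : G.Adj x y) :
    G.spanningInduce {x, y} = edge x y := by
  ext u v
  simp only [spanningInduce_adj, edge_adj, Set.mem_insert_iff, Set.mem_singleton_iff]
  constructor
  · rintro ⟨huv, hu | hu, hv | hv⟩ <;> subst hu hv <;> simp_all [huv.ne]
  · rintro ⟨(⟨rfl, rfl⟩ | ⟨rfl, rfl⟩), -⟩ <;> simp [h, h.symm]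

end spanningInduce

theorem support_edge_of_ne {x y : V} (h : x ≠ y) : (edge x y).support = {x, y} := by
  ext v
  simp only [mem_support, edge_adj, Set.mem_insert_iff, Set.mem_singleton_iff]
  constructor
  · rintro ⟨u, (⟨rfl, -⟩ | ⟨rfl, -⟩), -⟩
    exacts [Or.inl rfl, Or.inr rfl]
  · rintro (rfl | rfl)
    exacts [⟨y, Or.inl ⟨rfl, rfl⟩, h⟩, ⟨x, Or.inr ⟨rfl, rfl⟩, h.symm⟩]

section addTriangle

variable {T : SimpleGraph V} {x y w : V}

theorem support_sup_fromEdgeSet_pair (hxy : T.Adj x y) (hw : w ∉ T.support) :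
    (T ⊔ fromEdgeSet {s(x, w), s(y, w)}).support = insert w T.support := by
  have hx := hxy.mem_support_left
  have hy := hxy.mem_support_right
  have hxw : x ≠ w := ne_of_mem_of_not_mem hx hw
  ext v
  simp only [mem_support, sup_adj, fromEdgeSet_adj, Set.mem_insert_iff, Set.mem_singleton_iff,
    Sym2.eq_iff]
  constructor
  · rintro ⟨u, h | ⟨(⟨rfl, -⟩ | ⟨rfl, -⟩) | (⟨rfl, -⟩ | ⟨rfl, -⟩), -⟩⟩
    exacts [Or.inr ⟨u, h⟩, Or.inr hx, Or.inl rfl, Or.inr hy, Or.inl rfl]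
  · rintro (rfl | ⟨u, h⟩)
    exacts [⟨x, Or.inr ⟨Or.inl (Or.inr ⟨rfl, rfl⟩), hxw.symm⟩⟩, ⟨u, Or.inl h⟩]

theorem ncard_edgeSet_sup_fromEdgeSet_pair [Finite V] (hxy : T.Adj x y) (hw : w ∉ T.support) :
    (T ⊔ fromEdgeSet {s(x, w), s(y, w)}).edgeSet.ncard = T.edgeSet.ncard + 2 := by
  have hxw : x ≠ w := ne_of_mem_of_not_mem hxy.mem_support_left hw
  have hyw : y ≠ w := ne_of_mem_of_not_mem hxy.mem_support_right hw
  have hnew : (fromEdgeSet {s(x, w), s(y, w)}).edgeSet = {s(x, w), s(y, w)} := by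
    simp [edgeSet_fromEdgeSet, hxw, hyw]
  have hdisj : Disjoint T.edgeSet {s(x, w), s(y, w)} := by
    simp only [Set.disjoint_insert_right, Set.disjoint_singleton_right, mem_edgeSet]
    exact ⟨fun h => hw h.mem_support_right, fun h => hw h.mem_support_right⟩
  rw [edgeSet_sup, hnew, Set.ncard_union_eq hdisj, Set.ncard_pair]
  simp [hxy.ne, hxw]

end addTriangle

end SimpleGraph

open SimpleGraph

theorem IsTriTree.ncard_edgeSet_add_three {V : Type*} [Finite V] {T : SimpleGraph V}
    (hT : IsTriTree T) : T.edgeSet.ncard + 3 = 2 * T.support.ncard := by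
  induction hT with
  | single x y hxy =>
    rw [← edge, support_edge_of_ne hxy, Set.ncard_pair hxy, edgeSet_edge_of_ne hxy,
      Set.ncard_singleton]
  | grow T x y z _ hxy hz ih =>
    rw [ncard_edgeSet_sup_fromEdgeSet_pair hxy hz, support_sup_fromEdgeSet_pair hxy hz,
      Set.ncard_insert_of_notMem hz]
    omega

section TriConnected

variable {V : Type*} {S : SimpleGraph V} {W : Set V}

theorem ShareTri.mem_sym2_or_exists_triangle {e f : Sym2 V} (h : ShareTri S e f)
    (he : e ∈ W.sym2) :
    f ∈ W.sym2 ∨ ∃ x y w, S.Adj x y ∧ S.Adj x w ∧ S.Adj y w ∧ x ∈ W ∧ y ∈ W ∧ w ∉ W := by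
  induction e using Sym2.ind with | _ x y =>
  induction f using Sym2.ind with | _ u v =>
  obtain ⟨hxy, -, t, ht, hxyt, huvt⟩ := h
  simp only [Sym2.mem_iff, forall_eq_or_imp, forall_eq] at hxyt huvt
  rw [Set.mk_mem_sym2_iff] at he ⊢
  by_cases huv : u ∈ W ∧ v ∈ W
  · exact Or.inl huv
  obtain ⟨w, hwt, hwW⟩ : ∃ w ∈ t, w ∉ W := by
    rw [not_and_or] at huv
    exact huv.elim (fun hu => ⟨u, huvt.1, hu⟩) (fun hv => ⟨v, huvt.2, hv⟩)
  have hclique : S.IsClique (t : Set V) := (mem_cliqueSet_iff.mp ht).isClique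
  exact Or.inr ⟨x, y, w, hxy, hclique hxyt.1 hwt (ne_of_mem_of_not_mem he.1 hwW),
    hclique hxyt.2 hwt (ne_of_mem_of_not_mem he.2 hwW), he.1, he.2, hwW⟩

theorem TriConnected.exists_triangle_leaving (hconn : TriConnected S) {x₀ y₀ z : V}
    (h₀ : S.Adj x₀ y₀) (hx₀ : x₀ ∈ W) (hy₀ : y₀ ∈ W) (hz : z ∈ S.support) (hzW : z ∉ W) :
    ∃ x y w, S.Adj x y ∧ S.Adj x w ∧ S.Adj y w ∧ x ∈ W ∧ y ∈ W ∧ w ∉ W := by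
  by_contra hnone
  have hclosed : ∀ f, Relation.ReflTransGen (ShareTri S) s(x₀, y₀) f → f ∈ W.sym2 := by
    intro f hf
    induction hf with
    | refl => exact Set.mk_mem_sym2_iff.mpr ⟨hx₀, hy₀⟩
    | tail _ hshare ih => exact (hshare.mem_sym2_or_exists_triangle ih).resolve_right hnone
  obtain ⟨u, hzu⟩ := hz
  exact hzW (Set.mk_mem_sym2_iff.mp (hclosed _ (hconn _ h₀ _ hzu))).1

end TriConnected

section TriTreeBound

variable {V : Type*} {S : SimpleGraph V} {W : Set V} {x y w : V}

def TriTreeBound (S : SimpleGraph V) (W : Set V) : Prop :=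
  2 * W.ncard ≤ (S.spanningInduce W).edgeSet.ncard + 3 ∧
    (2 * W.ncard = (S.spanningInduce W).edgeSet.ncard + 3 → IsTriTree (S.spanningInduce W))

theorem triTreeBound_pair (h : S.Adj x y) : TriTreeBound S {x, y} := by
  rw [TriTreeBound, spanningInduce_pair_of_adj h, edgeSet_edge_of_ne h.ne, Set.ncard_pair h.ne,
    Set.ncard_singleton]
  exact ⟨le_rfl, fun _ => IsTriTree.single x y h.ne⟩

theorem TriTreeBound.insert_of_adj [Finite V] (hW : TriTreeBound S W) (hxy : S.Adj x y)
    (hxw : S.Adj x w) (hyw : S.Adj y w) (hx : x ∈ W) (hy : y ∈ W) (hw : w ∉ W) :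
    TriTreeBound S (insert w W) := by
  obtain ⟨hbound, htree⟩ := hW
  rw [TriTreeBound, Set.ncard_insert_of_notMem hw]
  set T := S.spanningInduce W
  set T' := S.spanningInduce (insert w W)
  have hTxy : T.Adj x y := ⟨hxy, hx, hy⟩
  have hwT : w ∉ T.support := fun h => hw (support_spanningInduce_subset h)
  have hle : T ⊔ fromEdgeSet {s(x, w), s(y, w)} ≤ T' := by
    refine sup_le (spanningInduce_mono (Set.subset_insert w W)) ?_
    refine (fromEdgeSet_le _).mpr (Set.sdiff_subset.trans ?_)
    simp only [Set.insert_subset_iff, Set.singleton_subset_iff, mem_edgeSet]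
    exact ⟨⟨hxw, .inr hx, .inl rfl⟩, ⟨hyw, .inr hy, .inl rfl⟩⟩
  have hgrow := ncard_edgeSet_sup_fromEdgeSet_pair hTxy hwT
  have hcard := Set.ncard_le_ncard (edgeSet_mono hle)
  refine ⟨by omega, fun heq => ?_⟩
  have hT' : T ⊔ fromEdgeSet {s(x, w), s(y, w)} = T' :=
    edgeSet_injective (Set.eq_of_subset_of_ncard_le (edgeSet_mono hle) (by omega))
  rw [← hT']
  exact (htree (by omega)).grow T x y w hTxy hwT

theorem TriConnected.triTreeBound_univ [Finite V] (hconn : TriConnected S)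
    (hsupp : ∀ v, v ∈ S.support) (h : S.Adj x y) : TriTreeBound S Set.univ := by
  refine (WellFoundedGT.induction_top (P := fun W : Set V => x ∈ W ∧ y ∈ W ∧ TriTreeBound S W)
    ⟨{x, y}, by simp, by simp, triTreeBound_pair h⟩ ?_).2.2
  rintro W hW ⟨hx, hy, hbound⟩
  obtain ⟨z, hzW⟩ := (Set.ne_univ_iff_exists_notMem W).mp hW
  obtain ⟨a, b, c, hab, hac, hbc, ha, hb, hc⟩ :=
    hconn.exists_triangle_leaving h hx hy (hsupp z) hzW
  exact ⟨insert c W, Set.ssubset_insert hc, .inr hx, .inr hy,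
    hbound.insert_of_adj hab hac hbc ha hb hc⟩

end TriTreeBound

theorem triconnected_vertex_edge_bound_general {V : Type*} [Fintype V]
    (S : SimpleGraph V) (hconn : TriConnected S) (hne : S.edgeSet.Nonempty)
    (hsupp : ∀ v : V, v ∈ S.support) :
    2 * ((Fintype.card V : ℤ) - 2) ≤ (S.edgeSet.ncard : ℤ) - 1 ∧
      (2 * ((Fintype.card V : ℤ) - 2) = (S.edgeSet.ncard : ℤ) - 1 ↔ IsTriTree S) := by
  obtain ⟨e, he⟩ := hne
  induction e using Sym2.ind with | _ x y =>
  obtain ⟨hbound, htree⟩ := hconn.triTreeBound_univ hsupp he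
  rw [spanningInduce_univ, Set.ncard_univ, Nat.card_eq_fintype_card] at hbound htree
  refine ⟨by omega, fun heq => htree (by omega), fun hS => ?_⟩
  have hcount := hS.ncard_edgeSet_add_three
  rw [Set.eq_univ_of_forall hsupp, Set.ncard_univ, Nat.card_eq_fintype_card] at hcount
  omega

/-- For a finite triangle-connected graph `S` with at least one edge and no isolated
vertices (every vertex of the ambient set is used), the number of vertices other than the
two root-edge endpoints is at most half the number of non-root edges:
`2(|V(S)| - 2) ≤ |E(S)| - 1`, with equality iff `S` is a triangle-tree. -/
theorem triconnected_vertex_edge_bound {V : Type*} [Fintype V] [DecidableEq V]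
    (S : SimpleGraph V) (hconn : TriConnected S) (hne : S.edgeSet.Nonempty)
    (hsupp : ∀ v : V, v ∈ S.support) :
    2 * ((Fintype.card V : ℤ) - 2) ≤ (S.edgeSet.ncard : ℤ) - 1 ∧
      (2 * ((Fintype.card V : ℤ) - 2) = (S.edgeSet.ncard : ℤ) - 1 ↔ IsTriTree S) :=
  triconnected_vertex_edge_bound_general S hconn hne hsupp
end
end

section
/- Let H be a finite simple graph and let V(H) = X ∪ Y be a partition of its vertex set into two blocks. Define W₀ to be the set of edges of H with both ends in X or both ends in Y; W₁ the set of edges xy ∈ W₀ such that every triangle of H containing xy has all three vertices in the same block as x and y; and W₂ the set of edges xy ∈ W₁ such that there is a triangle xyz of H with xz ∈ W₁ and yz ∈ W₁. Then W = (W₀ \ W₁) ∪ W₂ is a triangle cover of H, i.e., every triangle of H contains an edge of W. -/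
noncomputable section

/-- `W₀`: edges of `H` with both ends in `X` or both ends in the complement of `X`. -/
def W0 {V : Type*} (H : SimpleGraph V) (X : Set V) : Set (Sym2 V) :=
  {e | e ∈ H.edgeSet ∧ ((∀ v ∈ e, v ∈ X) ∨ (∀ v ∈ e, v ∉ X))}

/-- `W₁`: edges of `W₀` all of whose triangles stay in the block of the edge. -/
def W1 {V : Type*} (H : SimpleGraph V) (X : Set V) : Set (Sym2 V) :=
  {e | e ∈ W0 H X ∧ ∀ t ∈ H.cliqueSet 3, (∀ v ∈ e, v ∈ t) →
      ((∀ v ∈ t, v ∈ X) ∨ (∀ v ∈ t, v ∉ X))}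

/-- `W₂`: edges `xy ∈ W₁` lying in a triangle `xyz` with `xz, yz ∈ W₁`. -/
def W2 {V : Type*} [DecidableEq V] (H : SimpleGraph V) (X : Set V) : Set (Sym2 V) :=
  {e | e ∈ W1 H X ∧ ∃ x y z : V, e = s(x, y) ∧
      ({x, y, z} : Finset V) ∈ H.cliqueSet 3 ∧ s(x, z) ∈ W1 H X ∧ s(y, z) ∈ W1 H X}

/-- `W = (W₀ \ W₁) ∪ W₂`. -/
def Wcover {V : Type*} [DecidableEq V] (H : SimpleGraph V) (X : Set V) : Set (Sym2 V) :=
  (W0 H X \ W1 H X) ∪ W2 H X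

/-!
A triangle meeting both blocks has two vertices in the same block, and the edge joining them
lies in `W₀ \ W₁`, the triangle itself witnessing that it leaves its block. In a triangle inside
one block all three edges lie in `W₀`: either one of them is missing from `W₁`, and hence lies in
`W₀ \ W₁`, or all three lie in `W₁`, and then each of them lies in `W₂`.
-/

section

variable {V : Type*} {H : SimpleGraph V} {X : Set V}

lemma mk_mem_W0 {a b : V} (hab : H.Adj a b) (hblock : a ∈ X ↔ b ∈ X) : s(a, b) ∈ W0 H X :=
  ⟨hab, by by_cases ha : a ∈ X <;> simp [ha, ← hblock]⟩

lemma mk_notMem_W1_of_not_monochromatic {t : Finset V} (ht : t ∈ H.cliqueSet 3) {a b : V}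
    (ha : a ∈ t) (hb : b ∈ t) (hmix : ¬((∀ v ∈ t, v ∈ X) ∨ ∀ v ∈ t, v ∉ X)) :
    s(a, b) ∉ W1 H X :=
  fun hW1 ↦ hmix (hW1.2 t ht (Sym2.ball.mpr ⟨ha, hb⟩))

lemma exists_mem_Wcover_of_mk_notMem_W1 [DecidableEq V] {t : Finset V} {a b : V}
    (ha : a ∈ t) (hb : b ∈ t) (hab : H.Adj a b) (hblock : a ∈ X ↔ b ∈ X)
    (hW1 : s(a, b) ∉ W1 H X) :
    ∃ e ∈ Wcover H X, ∀ v ∈ e, v ∈ t :=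
  ⟨s(a, b), Or.inl ⟨mk_mem_W0 hab hblock, hW1⟩, Sym2.ball.mpr ⟨ha, hb⟩⟩

end

theorem Wcover_is_cover_general {V : Type*} [DecidableEq V]
    (H : SimpleGraph V) (X : Set V) :
    ∀ t ∈ H.cliqueSet 3, ∃ e ∈ Wcover H X, ∀ v ∈ e, v ∈ t := by
  intro t ht
  obtain ⟨x, y, z, hxy, hxz, hyz, rfl⟩ := SimpleGraph.is3Clique_iff.mp ht
  have hx : x ∈ ({x, y, z} : Finset V) := by simp
  have hy : y ∈ ({x, y, z} : Finset V) := by simp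
  have hz : z ∈ ({x, y, z} : Finset V) := by simp
  by_cases hmono : (∀ v ∈ ({x, y, z} : Finset V), v ∈ X) ∨ ∀ v ∈ ({x, y, z} : Finset V), v ∉ X
  · have hblock {a b : V} (ha : a ∈ ({x, y, z} : Finset V)) (hb : b ∈ ({x, y, z} : Finset V)) :
        a ∈ X ↔ b ∈ X := by
      rcases hmono with h | h <;> simp [h a ha, h b hb]
    by_cases hW1 : s(x, y) ∈ W1 H X ∧ s(x, z) ∈ W1 H X ∧ s(y, z) ∈ W1 H X
    · exact ⟨s(x, y), Or.inr ⟨hW1.1, x, y, z, rfl, ht, hW1.2⟩, Sym2.ball.mpr ⟨hx, hy⟩⟩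
    · rcases not_and_or.mp hW1 with h | h
      · exact exists_mem_Wcover_of_mk_notMem_W1 hx hy hxy (hblock hx hy) h
      rcases not_and_or.mp h with h | h
      · exact exists_mem_Wcover_of_mk_notMem_W1 hx hz hxz (hblock hx hz) h
      · exact exists_mem_Wcover_of_mk_notMem_W1 hy hz hyz (hblock hy hz) h
  · have hW1 {a b : V} (ha : a ∈ ({x, y, z} : Finset V)) (hb : b ∈ ({x, y, z} : Finset V)) :
        s(a, b) ∉ W1 H X :=
      mk_notMem_W1_of_not_monochromatic ht ha hb hmono
    have pigeonhole : (x ∈ X ↔ y ∈ X) ∨ (x ∈ X ↔ z ∈ X) ∨ (y ∈ X ↔ z ∈ X) := by tauto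
    rcases pigeonhole with h | h | h
    · exact exists_mem_Wcover_of_mk_notMem_W1 hx hy hxy h (hW1 hx hy)
    · exact exists_mem_Wcover_of_mk_notMem_W1 hx hz hxz h (hW1 hx hz)
    · exact exists_mem_Wcover_of_mk_notMem_W1 hy hz hyz h (hW1 hy hz)

/-- For any graph `H` and any partition of its vertices into `X` and its complement,
`W = (W₀ \ W₁) ∪ W₂` is a triangle cover: every triangle of `H` contains an edge of `W`. -/
theorem Wcover_is_cover {V : Type*} [Fintype V] [DecidableEq V]
    (H : SimpleGraph V) (X : Set V) :
    ∀ t ∈ H.cliqueSet 3, ∃ e ∈ Wcover H X, ∀ v ∈ e, v ∈ t :=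
  Wcover_is_cover_general H X
end
end

section
/- Let p = p(n) ∈ [0,1] satisfy dₙ = (n−2)·p(n)² → ∞, and let ς = ς(n) be positive reals with ς(n) → 0 and ς(n)²·dₙ → ∞. Call an edge of G = G_{n,p(n)} heavy if it lies in at least (1+ς(n))·dₙ triangles of G. Then for every ε > 0, the probability that the number of triangles of G containing at least one heavy edge is at most ε·n³·p(n)³ tends to 1 as n → ∞. -/
open MeasureTheory Filter

noncomputable section

/-!
Write `T_e` for the number of triangles through the edge `e` and `d = (n - 2) p²`. On a
heavy edge `T_e - d ≥ ςd`, so `T_e ≤ 2 (T_e - d)² / (ς² d)` once `ς ≤ 1`; hence at most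
`2 / (ς² d) · ∑_{e ∈ G} (T_e - d)²` triangles meet a heavy edge. Given that `e = xy` is
present, `T_e` counts the vertices `z` with both `xz` and `yz` present: a sum of `n - 2`
independent Bernoulli(`p²`) indicators, so `E[1_e (T_e - d)²] = p · (n - 2) p² (1 - p²) ≤ p d`.
Summing over fewer than `n²` pairs and applying Markov's inequality, more than `ε n³ p³` such
triangles occur with probability at most `2 / (ε ς² d) → 0`.
-/

open Finset

lemma mul_le_two_mul_sq_sub {σ d T : ℝ} (hσ : 0 < σ) (hσ1 : σ ≤ 1) (hd : 0 < d)
    (hT : (1 + σ) * d ≤ T) : σ ^ 2 * d * T ≤ 2 * (T - d) ^ 2 := by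
  have hu : σ * d ≤ T - d := by linarith
  have hσd : 0 ≤ σ * d := by positivity
  nlinarith [mul_le_mul hu hu hσd (hσd.trans hu), mul_le_mul_of_nonneg_left hu hσd,
    mul_le_mul_of_nonneg_right hσ1 (hσd.trans hu)]

namespace SimpleGraph

variable {V : Type*} (G : SimpleGraph V)

def trianglesThrough (e : Sym2 V) : Set (Finset V) :=
  {t | t ∈ G.cliqueSet 3 ∧ ∀ v ∈ e, v ∈ t}

def heavyTriangles (a : ℝ) : Set (Finset V) :=
  {t | t ∈ G.cliqueSet 3 ∧ ∃ e ∈ G.edgeSet, (∀ v ∈ e, v ∈ t) ∧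
    a ≤ ((G.trianglesThrough e).ncard : ℝ)}

variable {G}

lemma exists_mem_commonNeighbors_of_mem_cliqueSet_three [DecidableEq V] {x y : V}
    (hxy : G.Adj x y) {t : Finset V} (ht : t ∈ G.cliqueSet 3) (hx : x ∈ t) (hy : y ∈ t) :
    ∃ z ∈ G.commonNeighbors x y, {x, y, z} = t := by
  have hy' : y ∈ t.erase x := mem_erase.2 ⟨hxy.ne.symm, hy⟩
  obtain ⟨z, hz⟩ := card_eq_one.1 <| show #((t.erase x).erase y) = 1 by
    rw [card_erase_of_mem hy', card_erase_of_mem hx, ht.card_eq]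
  have hzt : z ∈ (t.erase x).erase y := hz ▸ mem_singleton_self z
  simp only [mem_erase] at hzt
  obtain ⟨hzy, hzx, hzt⟩ := hzt
  refine ⟨z, G.mem_commonNeighbors.2 ⟨ht.isClique hx hzt (Ne.symm hzx),
    ht.isClique hy hzt (Ne.symm hzy)⟩, ?_⟩
  rw [← insert_erase hx, ← insert_erase hy', hz]

lemma ncard_trianglesThrough_mk [DecidableEq V] {x y : V} (hxy : G.Adj x y) :
    (G.trianglesThrough s(x, y)).ncard = (G.commonNeighbors x y).ncard := by
  have himage : G.trianglesThrough s(x, y) =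
      (fun z => ({x, y, z} : Finset V)) '' G.commonNeighbors x y := by
    ext t
    constructor
    · rintro ⟨ht, hxyt⟩
      exact exists_mem_commonNeighbors_of_mem_cliqueSet_three hxy ht
        (hxyt x (Sym2.mem_mk_left x y)) (hxyt y (Sym2.mem_mk_right x y))
    · rintro ⟨z, hz, rfl⟩
      rw [mem_commonNeighbors] at hz
      refine ⟨is3Clique_triple_iff.2 ⟨hxy, hz⟩, fun v hv => ?_⟩
      rcases Sym2.mem_iff.1 hv with rfl | rfl <;> simp
  rw [himage]
  refine Set.InjOn.ncard_image fun z₁ hz₁ z₂ _ h => ?_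
  have : z₁ ∈ ({x, y, z₂} : Finset V) := h ▸ by simp
  rw [mem_commonNeighbors] at hz₁
  simp only [mem_insert, mem_singleton] at this
  rcases this with rfl | rfl | rfl
  · exact absurd hz₁.1 G.irrefl
  · exact absurd hz₁.2 G.irrefl
  · rfl

variable (G) [Fintype V] [DecidableRel G.Adj]

lemma ncard_heavyTriangles_le_sum (a : ℝ) :
    ((G.heavyTriangles a).ncard : ℝ) ≤
      ∑ e ∈ G.edgeFinset with a ≤ ((G.trianglesThrough e).ncard : ℝ),
        ((G.trianglesThrough e).ncard : ℝ) := by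
  have hsub : G.heavyTriangles a ⊆
      ⋃ e ∈ G.edgeFinset.filter (fun e => a ≤ ((G.trianglesThrough e).ncard : ℝ)),
        G.trianglesThrough e := by
    rintro t ⟨ht, e, he, het, heavy⟩
    simp only [Set.mem_iUnion]
    exact ⟨e, mem_filter.2 ⟨mem_edgeFinset.2 he, heavy⟩, ht, het⟩
  exact_mod_cast (Set.ncard_le_ncard hsub (Set.toFinite _)).trans (set_ncard_biUnion_le _ _)

lemma ncard_heavyTriangles_le {σ d : ℝ} (hσ : 0 < σ) (hσ1 : σ ≤ 1) (hd : 0 < d) :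
    ((G.heavyTriangles ((1 + σ) * d)).ncard : ℝ) ≤
      2 / (σ ^ 2 * d) *
        ∑ e ∈ G.edgeFinset, (((G.trianglesThrough e).ncard : ℝ) - d) ^ 2 := by
  refine (G.ncard_heavyTriangles_le_sum _).trans ?_
  rw [mul_sum]
  refine (sum_le_sum fun e he => ?_).trans
    (sum_le_sum_of_subset_of_nonneg (filter_subset _ _) fun _ _ _ => by positivity)
  rw [div_mul_eq_mul_div, le_div_iff₀ (by positivity)]
  nlinarith [mul_le_two_mul_sq_sub hσ hσ1 hd (mem_filter.1 he).2]

end SimpleGraph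

section Bernoulli

variable {p : ℝ}

instance : IsFiniteMeasure (berBool p) := by
  constructor
  simp [berBool]

lemma isProbabilityMeasure_berBool (hp : p ∈ Set.Icc (0 : ℝ) 1) :
    IsProbabilityMeasure (berBool p) := by
  constructor
  simp [berBool, ← ENNReal.ofReal_add hp.1 (sub_nonneg.2 hp.2)]

lemma integral_berBool (hp : p ∈ Set.Icc (0 : ℝ) 1) (f : Bool → ℝ) :
    ∫ b, f b ∂berBool p = p * f true + (1 - p) * f false := by
  rw [integral_fintype .of_finite, Fintype.sum_bool]
  simp [berBool, measureReal_def, hp.1, hp.2]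

def boolInd (b : Bool) : ℝ := if b then 1 else 0

lemma boolInd_mul_self (b : Bool) : boolInd b * boolInd b = boolInd b := by
  cases b <;> simp [boolInd]

lemma integral_prod_boolInd {ι : Type*} [Fintype ι] [DecidableEq ι]
    (hp : p ∈ Set.Icc (0 : ℝ) 1) (S : Finset ι) :
    ∫ ω, ∏ i ∈ S, boolInd (ω i) ∂Measure.pi (fun _ : ι => berBool p) = p ^ #S := by
  calc ∫ ω, ∏ i ∈ S, boolInd (ω i) ∂Measure.pi (fun _ : ι => berBool p)
      = ∫ ω, ∏ i, (fun i b => if i ∈ S then boolInd b else 1) i (ω i)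
          ∂Measure.pi (fun _ : ι => berBool p) := by simp_rw [Fintype.prod_ite_mem]
    _ = ∏ i, ∫ b, (if i ∈ S then boolInd b else 1) ∂berBool p :=
        integral_fintype_prod_eq_prod fun (i : ι) (b : Bool) => if i ∈ S then boolInd b else 1
    _ = p ^ #S := by simp [integral_berBool hp, boolInd, apply_ite]

end Bernoulli

section RandomGraph

variable {n : ℕ} {p : ℝ}

instance : IsFiniteMeasure (erMeasure n p) := by
  unfold erMeasure; infer_instance

lemma isProbabilityMeasure_erMeasure (hp : p ∈ Set.Icc (0 : ℝ) 1) :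
    IsProbabilityMeasure (erMeasure n p) := by
  have := isProbabilityMeasure_berBool hp
  unfold erMeasure; infer_instance

def wedgeInd (x y z : Fin n) (ω : Sym2 (Fin n) → Bool) : ℝ :=
  boolInd (ω s(x, z)) * boolInd (ω s(y, z))

lemma wedgeInd_mul_self (x y z : Fin n) (ω : Sym2 (Fin n) → Bool) :
    wedgeInd x y z ω * wedgeInd x y z ω = wedgeInd x y z ω := by
  simp only [wedgeInd]
  linear_combination (boolInd (ω s(y, z)) * boolInd (ω s(y, z))) * boolInd_mul_self (ω s(x, z))
    + boolInd (ω s(x, z)) * boolInd_mul_self (ω s(y, z))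

lemma integral_boolInd_mul_prod_wedgeInd (hp : p ∈ Set.Icc (0 : ℝ) 1) {x y : Fin n}
    (hxy : x ≠ y) {W : Finset (Fin n)} (hW : W ⊆ {x, y}ᶜ) :
    ∫ ω, boolInd (ω s(x, y)) * ∏ z ∈ W, wedgeInd x y z ω ∂erMeasure n p =
      p ^ (2 * #W + 1) := by
  have hxW : x ∉ W := fun h => by simpa using hW h
  have hyW : y ∉ W := fun h => by simpa using hW h
  have hinj (a : Fin n) : Set.InjOn (s(a, ·)) W := fun _ _ _ _ h => Sym2.congr_right.1 h
  have hdisj : Disjoint (W.image (s(x, ·))) (W.image (s(y, ·))) := by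
    simp only [disjoint_left, mem_image, not_exists, not_and]
    rintro _ ⟨z, hz, rfl⟩ z' hz' h
    rcases Sym2.eq_iff.1 h with ⟨rfl, -⟩ | ⟨rfl, -⟩
    exacts [hxy rfl, hyW hz]
  have hxy_mem : s(x, y) ∉ W.image (s(x, ·)) ∪ W.image (s(y, ·)) := by
    simp only [mem_union, mem_image, not_or, not_exists, not_and]
    refine ⟨fun z hz h => hyW ?_, fun z hz h => hxW ?_⟩
    · rwa [← Sym2.congr_right.1 h]
    · rcases Sym2.eq_iff.1 h with ⟨rfl, -⟩ | ⟨-, rfl⟩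
      exacts [(hxy rfl).elim, hz]
  have hprod (ω : Sym2 (Fin n) → Bool) :
      boolInd (ω s(x, y)) * ∏ z ∈ W, wedgeInd x y z ω =
        ∏ e ∈ insert s(x, y) (W.image (s(x, ·)) ∪ W.image (s(y, ·))), boolInd (ω e) := by
    rw [prod_insert hxy_mem, prod_union hdisj, prod_image (hinj x), prod_image (hinj y),
      ← prod_mul_distrib]
    rfl
  simp_rw [hprod]
  rw [erMeasure, integral_prod_boolInd hp, card_insert_of_notMem hxy_mem,
    card_union_of_disjoint hdisj, card_image_of_injOn (hinj x), card_image_of_injOn (hinj y)]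
  ring

lemma integral_boolInd_mul_wedgeInd_sub_mul (hp : p ∈ Set.Icc (0 : ℝ) 1) {x y z z' : Fin n}
    (hxy : x ≠ y) (hz : z ∈ ({x, y}ᶜ : Finset (Fin n)))
    (hz' : z' ∈ ({x, y}ᶜ : Finset (Fin n))) :
    ∫ ω, boolInd (ω s(x, y)) * ((wedgeInd x y z ω - p ^ 2) * (wedgeInd x y z' ω - p ^ 2))
      ∂erMeasure n p = if z = z' then p ^ 3 * (1 - p ^ 2) else 0 := by
  -- wedges at distinct `z, z'` use disjoint pairs of edges, hence are uncorrelated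
  have moment (W : Finset (Fin n)) (hW : W ⊆ {x, y}ᶜ) :=
    integral_boolInd_mul_prod_wedgeInd hp hxy hW
  have h0 := moment ∅ (empty_subset _)
  have h1 := moment {z} (singleton_subset_iff.2 hz)
  simp only [prod_empty, mul_one, prod_singleton, card_empty, card_singleton] at h0 h1
  split_ifs with hzz
  · subst hzz
    have hpt (ω : Sym2 (Fin n) → Bool) :
        boolInd (ω s(x, y)) * ((wedgeInd x y z ω - p ^ 2) * (wedgeInd x y z ω - p ^ 2)) =
          (1 - 2 * p ^ 2) * (boolInd (ω s(x, y)) * wedgeInd x y z ω)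
            + p ^ 4 * boolInd (ω s(x, y)) := by
      linear_combination boolInd (ω s(x, y)) * wedgeInd_mul_self x y z ω
    simp_rw [hpt]
    rw [integral_add .of_finite .of_finite, integral_const_mul, integral_const_mul, h0, h1]
    ring
  · have h2 := moment {z, z'} (insert_subset hz (singleton_subset_iff.2 hz'))
    simp only [prod_pair hzz, card_pair hzz] at h2
    have hpt (ω : Sym2 (Fin n) → Bool) :
        boolInd (ω s(x, y)) * ((wedgeInd x y z ω - p ^ 2) * (wedgeInd x y z' ω - p ^ 2)) =
          boolInd (ω s(x, y)) * (wedgeInd x y z ω * wedgeInd x y z' ω)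
            - p ^ 2 * (boolInd (ω s(x, y)) * wedgeInd x y z ω)
            - p ^ 2 * (boolInd (ω s(x, y)) * wedgeInd x y z' ω)
            + p ^ 4 * boolInd (ω s(x, y)) := by
      ring
    have h1' := moment {z'} (singleton_subset_iff.2 hz')
    simp only [prod_singleton, card_singleton] at h1'
    simp_rw [hpt]
    rw [integral_add .of_finite .of_finite, integral_sub .of_finite .of_finite,
      integral_sub .of_finite .of_finite, integral_const_mul, integral_const_mul,
      integral_const_mul, h0, h1, h1', h2]
    ring

def wedgeCount (x y : Fin n) (ω : Sym2 (Fin n) → Bool) : ℝ :=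
  ∑ z ∈ {x, y}ᶜ, wedgeInd x y z ω

lemma integral_boolInd_mul_sq_wedgeCount_sub (hp : p ∈ Set.Icc (0 : ℝ) 1) {x y : Fin n}
    (hxy : x ≠ y) :
    ∫ ω, boolInd (ω s(x, y)) * (wedgeCount x y ω - #({x, y}ᶜ : Finset (Fin n)) * p ^ 2) ^ 2
      ∂erMeasure n p = #({x, y}ᶜ : Finset (Fin n)) * (p ^ 3 * (1 - p ^ 2)) := by
  have hexpand (ω : Sym2 (Fin n) → Bool) :
      boolInd (ω s(x, y)) * (wedgeCount x y ω - #({x, y}ᶜ : Finset (Fin n)) * p ^ 2) ^ 2 =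
        ∑ z ∈ {x, y}ᶜ, ∑ z' ∈ {x, y}ᶜ,
          boolInd (ω s(x, y)) * ((wedgeInd x y z ω - p ^ 2) * (wedgeInd x y z' ω - p ^ 2)) := by
    rw [wedgeCount, ← nsmul_eq_mul, ← sum_const, ← sum_sub_distrib, sq, sum_mul_sum, mul_sum]
    simp_rw [mul_sum]
  simp_rw [hexpand]
  rw [integral_finsetSum _ fun _ _ => .of_finite]
  simp_rw [integral_finsetSum _ fun _ _ => .of_finite]
  rw [sum_congr rfl fun z hz => (sum_congr rfl fun z' hz' =>
    integral_boolInd_mul_wedgeInd_sub_mul hp hxy hz hz').trans (by rw [sum_ite_eq, if_pos hz]),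
    sum_const, nsmul_eq_mul]

instance (ω : Sym2 (Fin n) → Bool) : DecidableRel (erGraph n ω).Adj :=
  fun x y => inferInstanceAs (Decidable (x ≠ y ∧ ω s(x, y) = true))

lemma mem_edgeSet_erGraph {ω : Sym2 (Fin n) → Bool} {e : Sym2 (Fin n)} :
    e ∈ (erGraph n ω).edgeSet ↔ ¬e.IsDiag ∧ ω e = true := by
  induction e using Sym2.inductionOn with
  | hf a b => simp [erGraph, Sym2.mk_isDiag_iff]

lemma ncard_commonNeighbors_erGraph (ω : Sym2 (Fin n) → Bool) (x y : Fin n) :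
    (((erGraph n ω).commonNeighbors x y).ncard : ℝ) = wedgeCount x y ω := by
  have : (erGraph n ω).commonNeighbors x y =
      ↑(({x, y}ᶜ : Finset (Fin n)).filter
        fun z => ω s(x, z) = true ∧ ω s(y, z) = true) := by
    ext z
    simp only [SimpleGraph.mem_commonNeighbors, erGraph, compl_insert, coe_filter, mem_erase,
      mem_compl, mem_singleton, Set.mem_ofPred_eq]
    tauto
  rw [this, Set.ncard_coe_finset, natCast_card_filter, wedgeCount]
  refine sum_congr rfl fun z _ => ?_
  cases hx : ω s(x, z) <;> cases hy : ω s(y, z) <;> simp [wedgeInd, boolInd, hx, hy]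

lemma cast_card_compl_pair {x y : Fin n} (hxy : x ≠ y) :
    (#({x, y}ᶜ : Finset (Fin n)) : ℝ) = n - 2 := by
  have h2 : 2 ≤ n := by simpa using (card_pair hxy).symm.trans_le (card_le_univ _)
  rw [card_compl, card_pair hxy, Fintype.card_fin, Nat.cast_sub h2, Nat.cast_ofNat]

lemma integral_boolInd_mul_sq_ncard_trianglesThrough_sub (hp : p ∈ Set.Icc (0 : ℝ) 1)
    {e : Sym2 (Fin n)} (he : ¬e.IsDiag) :
    ∫ ω, boolInd (ω e) *
        (((erGraph n ω).trianglesThrough e).ncard - ((n : ℝ) - 2) * p ^ 2) ^ 2 ∂erMeasure n p =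
      ((n : ℝ) - 2) * (p ^ 3 * (1 - p ^ 2)) := by
  induction e using Sym2.inductionOn with
  | hf x y =>
    have hxy : x ≠ y := by simpa using he
    rw [← cast_card_compl_pair hxy, ← integral_boolInd_mul_sq_wedgeCount_sub hp hxy]
    refine integral_congr_ae (ae_of_all _ fun ω => ?_)
    cases hω : ω s(x, y)
    · simp [boolInd, hω]
    · have hadj : (erGraph n ω).Adj x y := ⟨hxy, hω⟩
      simp only [SimpleGraph.ncard_trianglesThrough_mk hadj, ncard_commonNeighbors_erGraph]

lemma sum_edgeFinset_erGraph (ω : Sym2 (Fin n) → Bool) (f : Sym2 (Fin n) → ℝ) :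
    ∑ e ∈ (erGraph n ω).edgeFinset, f e = ∑ e with ¬e.IsDiag, boolInd (ω e) * f e := by
  have : (erGraph n ω).edgeFinset = ({e | ¬e.IsDiag} : Finset _).filter (ω · = true) := by
    ext e; simp [mem_edgeSet_erGraph]
  rw [this, sum_filter]
  refine sum_congr rfl fun e _ => ?_
  cases ω e <;> simp [boolInd]

lemma integral_sum_edgeFinset_sq_sub_le (hp : p ∈ Set.Icc (0 : ℝ) 1) (hn : 2 ≤ n) :
    ∫ ω, ∑ e ∈ (erGraph n ω).edgeFinset,
        (((erGraph n ω).trianglesThrough e).ncard - ((n : ℝ) - 2) * p ^ 2) ^ 2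
      ∂erMeasure n p ≤
      n ^ 2 * (p * (((n : ℝ) - 2) * p ^ 2)) := by
  simp_rw [sum_edgeFinset_erGraph]
  rw [integral_finsetSum _ fun _ _ => .of_finite,
    sum_congr rfl fun e he => integral_boolInd_mul_sq_ncard_trianglesThrough_sub hp
      (mem_filter.1 he).2, sum_const, nsmul_eq_mul]
  have hcard : (#{e : Sym2 (Fin n) | ¬e.IsDiag} : ℝ) ≤ n ^ 2 := by
    rw [← Fintype.card_subtype, Sym2.card_subtype_not_diag, Fintype.card_fin]
    exact_mod_cast Nat.choose_le_pow n 2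
  have hn' : (0 : ℝ) ≤ n - 2 := by rw [sub_nonneg]; exact_mod_cast hn
  have hterm : ((n : ℝ) - 2) * (p ^ 3 * (1 - p ^ 2)) ≤ p * (((n : ℝ) - 2) * p ^ 2) := by
    nlinarith [mul_nonneg hn' (pow_nonneg hp.1 5)]
  calc _ ≤ (#{e : Sym2 (Fin n) | ¬e.IsDiag} : ℝ) * (p * (((n : ℝ) - 2) * p ^ 2)) := by
        gcongr
    _ ≤ _ := by
        have := hp.1
        gcongr

lemma erMeasure_heavyTriangles_gt_le {σ ε : ℝ} (hp : p ∈ Set.Icc (0 : ℝ) 1)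
    (hσ : 0 < σ) (hσ1 : σ ≤ 1) (hε : 0 < ε) (hd : 0 < ((n : ℝ) - 2) * p ^ 2) :
    erMeasure n p {ω | ¬(((erGraph n ω).heavyTriangles
        ((1 + σ) * (((n : ℝ) - 2) * p ^ 2))).ncard : ℝ) ≤ ε * n ^ 3 * p ^ 3} ≤
      ENNReal.ofReal (2 / (ε * (σ ^ 2 * (((n : ℝ) - 2) * p ^ 2)))) := by
  set d := ((n : ℝ) - 2) * p ^ 2
  have hn : (2 : ℝ) < n := by
    by_contra! h
    exact hd.not_ge (mul_nonpos_of_nonpos_of_nonneg (by linarith) (sq_nonneg p))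
  have hp0 : 0 < p := hp.1.lt_of_ne' fun h => by simp [d, h] at hd
  set Y : (Sym2 (Fin n) → Bool) → ℝ := fun ω =>
    ∑ e ∈ (erGraph n ω).edgeFinset, (((erGraph n ω).trianglesThrough e).ncard - d) ^ 2
  have hsub : {ω | ¬(((erGraph n ω).heavyTriangles ((1 + σ) * d)).ncard : ℝ) ≤
      ε * n ^ 3 * p ^ 3} ⊆ {ω | ε * n ^ 3 * p ^ 3 ≤ 2 / (σ ^ 2 * d) * Y ω} :=
    fun ω hω => (not_le.1 hω).le.trans ((erGraph n ω).ncard_heavyTriangles_le hσ hσ1 hd)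
  have hmarkov := mul_meas_ge_le_integral_of_nonneg (f := fun ω => 2 / (σ ^ 2 * d) * Y ω)
    (ae_of_all (erMeasure n p) fun ω => by positivity) .of_finite (ε * n ^ 3 * p ^ 3)
  rw [integral_const_mul] at hmarkov
  have hY := integral_sum_edgeFinset_sq_sub_le (n := n) hp (by exact_mod_cast hn.le)
  refine (measure_mono hsub).trans ?_
  rw [← ofReal_measureReal]
  refine ENNReal.ofReal_le_ofReal ?_
  set m := (erMeasure n p).real {ω | ε * n ^ 3 * p ^ 3 ≤ 2 / (σ ^ 2 * d) * Y ω}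
  have hn0 : (0 : ℝ) < n := by linarith
  have hm : ε * n ^ 3 * p ^ 3 * m ≤ 2 * n ^ 2 * p / σ ^ 2 :=
    calc ε * n ^ 3 * p ^ 3 * m ≤ 2 / (σ ^ 2 * d) * ∫ ω, Y ω ∂erMeasure n p := hmarkov
      _ ≤ 2 / (σ ^ 2 * d) * (n ^ 2 * (p * d)) := by gcongr
      _ = 2 * n ^ 2 * p / σ ^ 2 := by field_simp
  rw [le_div_iff₀ (by positivity)]
  calc m * (ε * (σ ^ 2 * d)) ≤ m * (ε * (σ ^ 2 * (n * p ^ 2))) := by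
        gcongr
        nlinarith [sq_nonneg p]
    _ = σ ^ 2 / (n ^ 2 * p) * (ε * n ^ 3 * p ^ 3 * m) := by field_simp
    _ ≤ σ ^ 2 / (n ^ 2 * p) * (2 * n ^ 2 * p / σ ^ 2) := by gcongr
    _ = 2 := by field_simp

end RandomGraph

theorem few_triangles_on_heavy_edges_general (p : ℕ → ℝ) (hp : ∀ n, p n ∈ Set.Icc (0 : ℝ) 1)
    (ς : ℕ → ℝ) (hςpos : ∀ n, 0 < ς n) (hς0 : Tendsto ς atTop (nhds 0))
    (hςd : Tendsto (fun n : ℕ => (ς n) ^ 2 * (((n : ℝ) - 2) * (p n) ^ 2)) atTop atTop)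
    (ε : ℝ) (hε : 0 < ε) :
    Tendsto (fun n : ℕ => erMeasure n (p n)
        {ω | ((Set.ncard {t | t ∈ (erGraph n ω).cliqueSet 3 ∧
              ∃ e ∈ (erGraph n ω).edgeSet, (∀ v ∈ e, v ∈ t) ∧
                (1 + ς n) * (((n : ℝ) - 2) * (p n) ^ 2)
                  ≤ ((Set.ncard {t' | t' ∈ (erGraph n ω).cliqueSet 3 ∧ ∀ v ∈ e, v ∈ t'}
                      : ℕ) : ℝ)} : ℕ) : ℝ)
            ≤ ε * (n : ℝ) ^ 3 * (p n) ^ 3})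
      atTop (nhds 1) := by
  set d : ℕ → ℝ := fun n => ((n : ℝ) - 2) * p n ^ 2
  show Tendsto (fun n => erMeasure n (p n) {ω | (((erGraph n ω).heavyTriangles
    ((1 + ς n) * d n)).ncard : ℝ) ≤ ε * n ^ 3 * p n ^ 3}) atTop (nhds 1)
  have hbound : Tendsto (fun n => ENNReal.ofReal (2 / (ε * (ς n ^ 2 * d n)))) atTop (nhds 0) := by
    simpa using ENNReal.tendsto_ofReal (tendsto_const_nhds.div_atTop (hςd.const_mul_atTop hε))
  have hbad := tendsto_of_tendsto_of_tendsto_of_le_of_le' tendsto_const_nhds hbound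
    (Eventually.of_forall fun _ => zero_le) <| by
      filter_upwards [hς0.eventually_lt_const one_pos, hςd.eventually_gt_atTop 0] with n hς1 hd
      exact erMeasure_heavyTriangles_gt_le (hp n) (hςpos n) hς1.le hε
        (pos_of_mul_pos_right hd (sq_nonneg _))
  have hgood (n : ℕ) : erMeasure n (p n) {ω | (((erGraph n ω).heavyTriangles
      ((1 + ς n) * d n)).ncard : ℝ) ≤ ε * n ^ 3 * p n ^ 3} = 1 - erMeasure n (p n)
      {ω | ¬(((erGraph n ω).heavyTriangles ((1 + ς n) * d n)).ncard : ℝ) ≤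
        ε * n ^ 3 * p n ^ 3} := by
    have := isProbabilityMeasure_erMeasure (n := n) (hp n)
    rw [← prob_compl_eq_one_sub .of_discrete, Set.compl_ofPred]
    simp only [not_not]
  simpa [hgood] using ENNReal.Tendsto.sub tendsto_const_nhds hbad (.inl ENNReal.one_ne_top)

/-- Suppose `d_n = (n-2) p(n)² → ∞` and `ς(n) → 0` with `ς(n)² d_n → ∞`.  Call an edge of
`G = G_{n,p(n)}` heavy if it lies in at least `(1+ς(n)) d_n` triangles.  Then for every
`ε > 0`, w.h.p. the number of triangles of `G` containing a heavy edge is at most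
`ε n³ p(n)³`. -/
theorem few_triangles_on_heavy_edges (p : ℕ → ℝ) (hp : ∀ n, p n ∈ Set.Icc (0 : ℝ) 1)
    (hd : Tendsto (fun n : ℕ => ((n : ℝ) - 2) * (p n) ^ 2) atTop atTop)
    (ς : ℕ → ℝ) (hςpos : ∀ n, 0 < ς n) (hς0 : Tendsto ς atTop (nhds 0))
    (hςd : Tendsto (fun n : ℕ => (ς n) ^ 2 * (((n : ℝ) - 2) * (p n) ^ 2)) atTop atTop)
    (ε : ℝ) (hε : 0 < ε) :
    Tendsto (fun n : ℕ => erMeasure n (p n)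
        {ω | ((Set.ncard {t | t ∈ (erGraph n ω).cliqueSet 3 ∧
              ∃ e ∈ (erGraph n ω).edgeSet, (∀ v ∈ e, v ∈ t) ∧
                (1 + ς n) * (((n : ℝ) - 2) * (p n) ^ 2)
                  ≤ ((Set.ncard {t' | t' ∈ (erGraph n ω).cliqueSet 3 ∧ ∀ v ∈ e, v ∈ t'}
                      : ℕ) : ℝ)} : ℕ) : ℝ)
            ≤ ε * (n : ℝ) ^ 3 * (p n) ^ 3})
      atTop (nhds 1) :=
  few_triangles_on_heavy_edges_general p hp ς hςpos hς0 hςd ε hε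
end
end

section
/- For every real number d with 1/2 ≤ d ≤ 8, 4·(2d+1)^{−1/2} − 3·exp(−(d/2)·(1+e^{−d})) < 1. -/
/-!
With `s = √(2d+1)` the inequality reads `4 < s (1 + 3 E(d))`, where
`E(d) = exp (-(d/2) (1 + e^{-d}))`. On a range `s₀ ≤ s ≤ s₁` with `dᵢ = (sᵢ² - 1)/2`, the bound
`e^{-d} ≤ e^{-d₀}` followed by the tangent line of `exp` at `d₁` bounds `E(d)` from below by an
affine function of `d₁ - d = (s₁² - s²)/2`. Then `s (1 + 3 E(d))` dominates a cubic in `s` that is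
concave for `s ≥ 0`, so it suffices to check the two ends of the range. Seven ranges with rational
ends cover `1/2 ≤ d ≤ 8`, and the exponentials at their ends are bounded by `(1 ± t/128)^{±128}`.
-/

open Real Set

namespace Real

theorem one_add_div_pow_le_exp {n : ℕ} {t : ℝ} (ht : -(n : ℝ) ≤ t) : (1 + t / n) ^ n ≤ exp t := by
  simpa [neg_div] using one_sub_div_pow_le_exp_neg (t := -t) (by linarith)

theorem exp_neg_le_inv_one_add_div_pow (n : ℕ) {t : ℝ} (ht : 0 ≤ t) :
    exp (-t) ≤ ((1 + t / n) ^ n)⁻¹ := by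
  rw [exp_neg]
  exact inv_anti₀ (by positivity) (one_add_div_pow_le_exp (by linarith [n.cast_nonneg (α := ℝ)]))

theorem exp_mul_one_add_sub_le_exp (x y : ℝ) : exp y * (1 + (x - y)) ≤ exp x :=
  calc exp y * (1 + (x - y)) ≤ exp y * exp (x - y) := by
        gcongr; linarith [add_one_le_exp (x - y)]
    _ = exp x := by rw [← exp_add, add_sub_cancel]

end Real

theorem lt_mul_add_mul_sq_sub_sq {K c m s₀ s₁ s : ℝ} (hm : 0 ≤ m) (hs₀ : 0 ≤ s₀)
    (hs : s ∈ Icc s₀ s₁) (h₀ : K < s₀ * (c + m * (s₁ ^ 2 - s₀ ^ 2))) (h₁ : K < s₁ * c) :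
    K < s * (c + m * (s₁ ^ 2 - s ^ 2)) := by
  obtain ⟨hs₀s, hss₁⟩ := hs
  -- The cubic exceeds its chord through `s₀` and `s₁` by `m (s - s₀) (s₁ - s) (s + s₀ + s₁)`.
  have chord : (s₁ - s₀) * (s * (c + m * (s₁ ^ 2 - s ^ 2))) =
      (s₁ - s) * (s₀ * (c + m * (s₁ ^ 2 - s₀ ^ 2))) + (s - s₀) * (s₁ * c)
        + (s₁ - s₀) * m * ((s - s₀) * (s₁ - s) * (s + s₀ + s₁)) := by ring
  rcases hs₀s.eq_or_lt with rfl | hlt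
  · exact h₀
  have : 0 ≤ (s₁ - s₀) * m * ((s - s₀) * (s₁ - s) * (s + s₀ + s₁)) :=
    mul_nonneg (mul_nonneg (by linarith) hm)
      (mul_nonneg (mul_nonneg (sub_nonneg.2 hs₀s) (sub_nonneg.2 hss₁)) (by linarith))
  nlinarith

theorem mul_one_add_le_exp_neg_half_mul_one_add_exp_neg {a b d u L : ℝ} (ha : 0 ≤ a)
    (hd : d ∈ Icc a b) (hu : exp (-a) ≤ u) (hL : L ≤ exp (-(b / 2 * (1 + u)))) :
    L * (1 + (b - d) * (1 + u) / 2) ≤ exp (-(d / 2) * (1 + exp (-d))) := by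
  obtain ⟨had, hdb⟩ := hd
  have hu₀ : 0 ≤ u := (exp_pos _).le.trans hu
  have hdu : exp (-d) ≤ u := (exp_le_exp.2 (by linarith)).trans hu
  calc L * (1 + (b - d) * (1 + u) / 2)
      ≤ exp (-(b / 2 * (1 + u))) * (1 + (-(d / 2 * (1 + u)) - -(b / 2 * (1 + u)))) := by
        rw [show -(d / 2 * (1 + u)) - -(b / 2 * (1 + u)) = (b - d) * (1 + u) / 2 by ring]
        gcongr
    _ ≤ exp (-(d / 2 * (1 + u))) := exp_mul_one_add_sub_le_exp _ _
    _ ≤ exp (-(d / 2) * (1 + exp (-d))) := exp_le_exp.2 (by nlinarith)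

theorem lt_one_of_exp_bounds {s₀ s₁ u L d : ℝ} (hs₀ : 1 ≤ s₀)
    (hu : exp (-((s₀ ^ 2 - 1) / 2)) ≤ u) (hL₀ : 0 ≤ L)
    (hL : L ≤ exp (-((s₁ ^ 2 - 1) / 2 / 2 * (1 + u))))
    (h₀ : 4 < s₀ * (1 + 3 * L * (1 + (1 + u) * (s₁ ^ 2 - s₀ ^ 2) / 4)))
    (h₁ : 4 < s₁ * (1 + 3 * L))
    (hd : d ∈ Icc ((s₀ ^ 2 - 1) / 2) ((s₁ ^ 2 - 1) / 2)) :
    4 * (2 * d + 1) ^ (-(1 / 2) : ℝ) - 3 * exp (-(d / 2) * (1 + exp (-d))) < 1 := by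
  have hs₀_sq : 1 ≤ s₀ ^ 2 := one_le_pow₀ hs₀
  have hs₁ : 0 < s₁ := by nlinarith
  have hE := mul_one_add_le_exp_neg_half_mul_one_add_exp_neg (by linarith) hd hu hL
  obtain ⟨hd₀, hd₁⟩ := hd
  have hpos : 0 < 2 * d + 1 := by linarith
  have hrpow : (2 * d + 1) ^ (-(1 / 2) : ℝ) = (√(2 * d + 1))⁻¹ := by
    rw [rpow_neg hpos.le, sqrt_eq_rpow]
  have hs_sq : √(2 * d + 1) ^ 2 = 2 * d + 1 := sq_sqrt hpos.le
  have hs : √(2 * d + 1) ∈ Icc s₀ s₁ :=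
    ⟨le_sqrt_of_sq_le (by linarith), sqrt_le_iff.2 ⟨hs₁.le, by linarith⟩⟩
  rw [hrpow]
  generalize √(2 * d + 1) = s at hs hs_sq
  have hs₀s : s₀ ≤ s := hs.1
  have hcubic : 4 < s * ((1 + 3 * L) + 3 * L * (1 + u) / 4 * (s₁ ^ 2 - s ^ 2)) :=
    lt_mul_add_mul_sq_sub_sq (by have := (exp_pos _).le.trans hu; positivity) (by linarith) hs
      (by linarith) (by linarith)
  have hE' : L * (1 + (1 + u) * (s₁ ^ 2 - s ^ 2) / 4) ≤ exp (-(d / 2) * (1 + exp (-d))) := by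
    convert hE using 3; rw [hs_sq]; ring
  have : 4 * s⁻¹ < 1 + 3 * exp (-(d / 2) * (1 + exp (-d))) := by
    rw [← div_eq_mul_inv, div_lt_iff₀ (by linarith)]
    nlinarith
  linarith

/-- Rational data certifying the inequality for `s₀ ≤ √(2d+1) ≤ s₁`: `u` bounds `e^{-d₀}` from above
and `L` bounds `exp (-(d₁/2) (1 + u))` from below, where `dᵢ = (sᵢ² - 1)/2`. -/
def IsCertificate (s₀ s₁ u L : ℝ) : Prop :=
  1 ≤ s₀ ∧ ((1 + (s₀ ^ 2 - 1) / 2 / 128) ^ 128)⁻¹ ≤ u ∧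
    (s₁ ^ 2 - 1) / 2 / 2 * (1 + u) ≤ 128 ∧ 0 ≤ L ∧
    L ≤ (1 - (s₁ ^ 2 - 1) / 2 / 2 * (1 + u) / 128) ^ 128 ∧
    4 < s₀ * (1 + 3 * L * (1 + (1 + u) * (s₁ ^ 2 - s₀ ^ 2) / 4)) ∧ 4 < s₁ * (1 + 3 * L)

theorem lt_one_of_isCertificate {s₀ s₁ u L d : ℝ} (hc : IsCertificate s₀ s₁ u L)
    (hd : d ∈ Icc ((s₀ ^ 2 - 1) / 2) ((s₁ ^ 2 - 1) / 2)) :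
    4 * (2 * d + 1) ^ (-(1 / 2) : ℝ) - 3 * exp (-(d / 2) * (1 + exp (-d))) < 1 := by
  obtain ⟨hs₀, hu, ht, hL₀, hL, h₀, h₁⟩ := hc
  have ha : 0 ≤ (s₀ ^ 2 - 1) / 2 := div_nonneg (sub_nonneg.2 (one_le_pow₀ hs₀)) zero_le_two
  refine lt_one_of_exp_bounds hs₀ ((exp_neg_le_inv_one_add_div_pow 128 ha).trans ?_) hL₀
    (hL.trans ?_) h₀ h₁ hd
  · exact_mod_cast hu
  · exact_mod_cast one_sub_div_pow_le_exp_neg (n := 128) (by exact_mod_cast ht)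

/-- For every real `d` with `1/2 ≤ d ≤ 8`,
`4 (2d+1)^{-1/2} - 3 exp(-(d/2)(1+e^{-d})) < 1`. -/
theorem four_rpow_sub_three_exp_lt_one (d : ℝ) (hd₁ : 1 / 2 ≤ d) (hd₂ : d ≤ 8) :
    4 * (2 * d + 1) ^ (-(1 / 2) : ℝ)
      - 3 * Real.exp (-(d / 2) * (1 + Real.exp (-d))) < 1 := by
  rcases le_total d (((7 / 4) ^ 2 - 1) / 2) with h₁ | h₁
  · exact lt_one_of_isCertificate (s₀ := 7 / 5) (u := 31 / 50) (L := 54 / 125)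
      (by norm_num [IsCertificate]) ⟨by linarith, h₁⟩
  rcases le_total d (((43 / 20) ^ 2 - 1) / 2) with h₂ | h₂
  · exact lt_one_of_isCertificate (u := 359 / 1000) (L := 29 / 100)
      (by norm_num [IsCertificate]) ⟨h₁, h₂⟩
  rcases le_total d (((53 / 20) ^ 2 - 1) / 2) with h₃ | h₃
  · exact lt_one_of_isCertificate (u := 83 / 500) (L := 17 / 100)
      (by norm_num [IsCertificate]) ⟨h₂, h₃⟩
  rcases le_total d (((31 / 10) ^ 2 - 1) / 2) with h₄ | h₄
  · exact lt_one_of_isCertificate (u := 51 / 1000) (L := 51 / 500)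
      (by norm_num [IsCertificate]) ⟨h₃, h₄⟩
  rcases le_total d (((17 / 5) ^ 2 - 1) / 2) with h₅ | h₅
  · exact lt_one_of_isCertificate (u := 29 / 2000) (L := 667 / 10000)
      (by norm_num [IsCertificate]) ⟨h₄, h₅⟩
  rcases le_total d (((37 / 10) ^ 2 - 1) / 2) with h₆ | h₆
  · exact lt_one_of_isCertificate (u := 567 / 100000) (L := 79 / 2000)
      (by norm_num [IsCertificate]) ⟨h₅, h₆⟩
  exact lt_one_of_isCertificate (s₁ := 21 / 5) (u := 41 / 20000) (L := 9 / 625)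
    (by norm_num [IsCertificate]) ⟨h₆, by linarith⟩
end
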